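/- arXiv:1508.01024 — 6 statements merged into one kernel-verified Lean document; each statement's English description precedes it below -/
import Mathlib

section
/- Let q > 0 with q ≠ 1 and let c > 1 be fixed. Then for m = 1 and m = 2, the function x ↦ -G_m(x;q,c) is completely monotonic on (0,∞). -/
open Real Set

/-- The `q`-digamma function `ψ_q`.  For `0 < q < 1`,
`ψ_q(x) = -log(1-q) + log q · ∑_{n≥1} q^{nx}/(1-q^n)`; for `q > 1`,
`ψ_q(x) = -log(q-1) + log q · (x - 1/2 - ∑_{n≥1} q^{-nx}/(1-q^{-n}))`. -/
noncomputable def qDigamma (q : ℝ) (x : ℝ) : ℝ :=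
  if q < 1 then
    -Real.log (1 - q) + Real.log q * ∑' n : ℕ, q ^ (((n : ℝ) + 1) * x) / (1 - q ^ ((n : ℝ) + 1))
  else
    -Real.log (q - 1) +
      Real.log q * (x - 1 / 2 -
        ∑' n : ℕ, q ^ (-((n : ℝ) + 1) * x) / (1 - q ^ (-((n : ℝ) + 1))))

/-- The `m`-th `q`-polygamma function `ψ_q^{(m)}` (with `ψ_q^{(0)} = ψ_q`). -/
noncomputable def qPolygamma (q : ℝ) (m : ℕ) : ℝ → ℝ :=
  iteratedDeriv m (qDigamma q)

/-- `f` is completely monotonic on `s`: it has derivatives of all orders on `s`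
and `(-1)^k f^{(k)}(x) ≥ 0` for all `x ∈ s` and all `k ≥ 0`. -/
def CompletelyMonotoneOn (f : ℝ → ℝ) (s : Set ℝ) : Prop :=
  ContDiffOn ℝ (⊤ : ℕ∞) f s ∧ ∀ k : ℕ, ∀ x ∈ s, 0 ≤ (-1 : ℝ) ^ k * iteratedDerivWithin k f s x

/-- The finite difference `Δf(x;c) = (f(x+c)-f(x))/c`. -/
noncomputable def fdiff (f : ℝ → ℝ) (c x : ℝ) : ℝ := (f (x + c) - f x) / c

/-- The constant `d_{m,q}`. -/
noncomputable def dmq (m : ℕ) (q : ℝ) : ℝ := if q < 1 ∧ 2 ≤ m then (m : ℝ) - 1 else 1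

/-- The constant `α_{r,m,n,s} = (m-1)!(n-1)!/((r-1)!(s-1)!)`. -/
noncomputable def alphaC (r m n s : ℕ) : ℝ :=
  ((m - 1).factorial * (n - 1).factorial : ℝ) / (((r - 1).factorial : ℝ) * ((s - 1).factorial : ℝ))

/-- The function `G_m(x;q,c)`. -/
noncomputable def Gfun (m : ℕ) (q c x : ℝ) : ℝ :=
  (m : ℝ) * (-1 : ℝ) ^ (m + 1) * fdiff (qPolygamma q (m - 1)) c x * fdiff (qDigamma q) c x
    + (-1 : ℝ) ^ (m + 1) * fdiff (qPolygamma q m) c x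
    - (-1 : ℝ) ^ (m + 1) * dmq m q * Real.log q * fdiff (qPolygamma q (m - 1)) c x

/-- The function `F_{r,m,n,s}(x;q,c)`. -/
noncomputable def Ffun (r m n s : ℕ) (q c x : ℝ) : ℝ :=
  (-1 : ℝ) ^ (m + n) * fdiff (qPolygamma q (m - 1)) c x * fdiff (qPolygamma q (n - 1)) c x
    - alphaC r m n s * (-1 : ℝ) ^ (r + s) *
        fdiff (qPolygamma q (r - 1)) c x * fdiff (qPolygamma q (s - 1)) c x

namespace QDG
open Filter Topology Finset


/-- superhomogeneity of sinh -/
lemma sinh_superhom {c : ℝ} (hc : 1 ≤ c) {t : ℝ} (ht : 0 ≤ t) :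
    c * Real.sinh t ≤ Real.sinh (c * t) := by
  have hF' : ∀ y : ℝ, HasDerivAt (fun y => Real.sinh (c * y) - c * Real.sinh y)
      (Real.cosh (c*y) * c - c * Real.cosh y) y := by
    intro y
    have h1 : HasDerivAt (fun x : ℝ => c * x) c y := by
      simpa using (hasDerivAt_id y).const_mul c
    exact ((Real.hasDerivAt_sinh (c*y)).comp y h1).sub ((Real.hasDerivAt_sinh y).const_mul c)
  have hmono : MonotoneOn (fun y => Real.sinh (c * y) - c * Real.sinh y) (Ici 0) := by
    apply monotoneOn_of_deriv_nonneg (convex_Ici 0)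
    · exact fun y _ => (hF' y).continuousAt.continuousWithinAt
    · exact fun y _ => (hF' y).differentiableAt.differentiableWithinAt
    · intro y hy
      rw [interior_Ici] at hy
      rw [(hF' y).deriv]
      have hcy : Real.cosh y ≤ Real.cosh (c*y) := by
        rw [Real.cosh_le_cosh]
        have hy' : (0:ℝ) ≤ y := le_of_lt hy
        rw [abs_of_nonneg hy', abs_of_nonneg (by nlinarith : (0:ℝ) ≤ c * y)]
        nlinarith
      nlinarith
  have h0 : (0:ℝ) ≤ Real.sinh (c * t) - c * Real.sinh t := by
    have := hmono (self_mem_Ici (a := (0:ℝ))) (mem_Ici.2 ht) ht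
    simpa using this
  linarith

lemma expm1_eq (u : ℝ) : Real.exp (2*u) - 1 = Real.exp u * (2 * Real.sinh u) := by
  rw [Real.sinh_eq]
  rw [show (2:ℝ)*u = u + u by ring, Real.exp_add, Real.exp_neg]
  have := Real.exp_pos u
  field_simp

/-- the sign of the second derivative, in multiplied-out form -/
lemma g2_key {c : ℝ} (hc : 1 ≤ c) {s : ℝ} (hs : 0 < s) :
    c^2 * Real.exp (c*s) * (Real.exp s - 1)^2 ≤ Real.exp s * (Real.exp (c*s) - 1)^2 := by
  have e1 : Real.exp s - 1 = Real.exp (s/2) * (2 * Real.sinh (s/2)) := by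
    simpa [show 2*(s/2) = s by ring] using expm1_eq (s/2)
  have e2 : Real.exp (c*s) - 1 = Real.exp (c*s/2) * (2 * Real.sinh (c*s/2)) := by
    simpa [show 2*(c*s/2) = c*s by ring] using expm1_eq (c*s/2)
  have key : (c * Real.sinh (s/2))^2 ≤ Real.sinh (c*(s/2))^2 := by
    have h0 : 0 ≤ c * Real.sinh (s/2) := by
      have : 0 ≤ Real.sinh (s/2) := by
        rw [Real.sinh_nonneg_iff]; linarith
      nlinarith
    have := sinh_superhom hc (le_of_lt (by linarith : (0:ℝ) < s/2))
    nlinarith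
  rw [e1, e2]
  have hE1 : Real.exp (s/2) ^ 2 = Real.exp s := by
    rw [← Real.exp_nat_mul]; congr 1; push_cast; ring
  have hE2 : Real.exp (c*s/2) ^ 2 = Real.exp (c*s) := by
    rw [← Real.exp_nat_mul]; congr 1; push_cast; ring
  have h1 : c^2 * Real.exp (c*s) * (Real.exp (s/2) * (2 * Real.sinh (s/2)))^2
      = 4 * Real.exp (c*s) * Real.exp s * (c * Real.sinh (s/2))^2 := by
    rw [mul_pow, hE1]; ring
  have h2 : Real.exp s * (Real.exp (c*s/2) * (2 * Real.sinh (c*s/2)))^2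
      = 4 * Real.exp (c*s) * Real.exp s * (Real.sinh (c*(s/2)))^2 := by
    rw [mul_pow, hE2]; ring_nf
  rw [h1, h2]
  have hpos : (0:ℝ) < 4 * Real.exp (c*s) * Real.exp s := by positivity
  nlinarith





noncomputable def g1 (c s : ℝ) : ℝ := c / (Real.exp (c*s) - 1) - 1 / (Real.exp s - 1)

noncomputable def Gf (c s : ℝ) : ℝ :=
  Real.log (1 - Real.exp (-(c*s))) - Real.log (1 - Real.exp (-s))

lemma expm1_pos {a s : ℝ} (ha : 0 < a) (hs : 0 < s) : 0 < Real.exp (a*s) - 1 := by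
  have : (1:ℝ) < Real.exp (a*s) := by
    rw [Real.one_lt_exp_iff]; positivity
  linarith

lemma one_sub_exp_neg_pos {a s : ℝ} (ha : 0 < a) (hs : 0 < s) :
    0 < 1 - Real.exp (-(a*s)) := by
  have : Real.exp (-(a*s)) < 1 := by
    rw [Real.exp_lt_one_iff]; simp; positivity
  linarith

/-- derivative of `s ↦ a/(exp(a s) - 1)` -/
lemma hasDerivAt_aux1 {a s : ℝ} (ha : 0 < a) (hs : 0 < s) :
    HasDerivAt (fun y => a / (Real.exp (a*y) - 1))
      (-(a^2 * Real.exp (a*s) / (Real.exp (a*s) - 1)^2)) s := by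
  have h1 : HasDerivAt (fun y : ℝ => Real.exp (a*y) - 1) (a * Real.exp (a*s)) s := by
    have hi : HasDerivAt (fun y : ℝ => a * y) a s := by simpa using (hasDerivAt_id s).const_mul a
    simpa [mul_comm] using ((Real.hasDerivAt_exp (a*s)).comp s hi).sub_const 1
  have hne : Real.exp (a*s) - 1 ≠ 0 := ne_of_gt (expm1_pos ha hs)
  have := (hasDerivAt_const s a).div h1 hne
  refine this.congr_deriv (Eq.symm ?_)
  field_simp
  try ring

/-- derivative of `Gf c` is `g1 c` -/
lemma hasDerivAt_Gf {c s : ℝ} (hc : 0 < c) (hs : 0 < s) :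
    HasDerivAt (Gf c) (g1 c s) s := by
  have base : ∀ a : ℝ, 0 < a → HasDerivAt (fun y => Real.log (1 - Real.exp (-(a*y))))
      (a / (Real.exp (a*s) - 1)) s := by
    intro a ha
    have hi : HasDerivAt (fun y : ℝ => -(a * y)) (-a) s := by
      simpa using ((hasDerivAt_id s).const_mul a).fun_neg
    have h1 : HasDerivAt (fun y : ℝ => 1 - Real.exp (-(a*y))) (a * Real.exp (-(a*s))) s := by
      have := ((Real.hasDerivAt_exp (-(a*s))).comp s hi).const_sub 1
      refine this.congr_deriv (Eq.symm ?_); ring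
    have hne : 1 - Real.exp (-(a*s)) ≠ 0 := ne_of_gt (one_sub_exp_neg_pos ha hs)
    have := h1.log hne
    refine this.congr_deriv (Eq.symm ?_)
    rw [Real.exp_neg]
    have h2 := (Real.exp_pos (a*s))
    have h3 := expm1_pos ha hs
    field_simp
    try ring
  have h1 := base c hc
  have h2 := base 1 one_pos
  have h2' : HasDerivAt (fun y => Real.log (1 - Real.exp (-y)))
      (1 / (Real.exp s - 1)) s := by
    simpa using h2
  exact (h1.sub h2')

/-- g1 is monotone on (0,∞) -/
lemma g1_mono {c : ℝ} (hc : 1 ≤ c) : MonotoneOn (g1 c) (Ioi 0) := by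
  have hc0 : 0 < c := lt_of_lt_of_le one_pos hc
  have hder : ∀ s : ℝ, 0 < s → HasDerivAt (g1 c)
      (Real.exp s / (Real.exp s - 1)^2 - c^2 * Real.exp (c*s) / (Real.exp (c*s) - 1)^2) s := by
    intro s hs
    have h1 := hasDerivAt_aux1 hc0 hs
    have h2 := hasDerivAt_aux1 one_pos hs
    have h2' : HasDerivAt (fun y => 1 / (Real.exp y - 1))
        (-(Real.exp s / (Real.exp s - 1)^2)) s := by simpa using h2
    have := h1.sub h2'
    refine this.congr_deriv (Eq.symm ?_)
    ring
  apply monotoneOn_of_deriv_nonneg (convex_Ioi 0)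
  · exact fun y hy => (hder y hy).continuousAt.continuousWithinAt
  · intro y hy
    rw [interior_Ioi] at hy
    exact (hder y hy).differentiableAt.differentiableWithinAt
  · intro y hy
    rw [interior_Ioi] at hy
    rw [(hder y hy).deriv]
    have key := g2_key hc hy
    have p1 := expm1_pos hc0 hy
    have p2 := expm1_pos one_pos hy
    rw [one_mul] at p2
    rw [sub_nonneg, div_le_div_iff₀ (pow_pos p1 2) (pow_pos p2 2)]
    calc c ^ 2 * Real.exp (c * y) * (Real.exp y - 1) ^ 2
        ≤ Real.exp y * (Real.exp (c*y) - 1)^2 := g2_key hc hy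
      _ = Real.exp y * (Real.exp (c*y) - 1)^2 := rfl

lemma tendsto_expm1_div {a : ℝ} (ha : 0 < a) :
    Tendsto (fun s => (1 - Real.exp (-(a*s)))/s) (𝓝[>] 0) (𝓝 a) := by
  have h1 : HasDerivAt (fun y : ℝ => 1 - Real.exp (-(a*y))) a 0 := by
    have hi : HasDerivAt (fun y : ℝ => -(a * y)) (-a) 0 := by
      simpa using ((hasDerivAt_id (0:ℝ)).const_mul a).fun_neg
    have := ((Real.hasDerivAt_exp (-(a*0))).comp 0 hi).const_sub 1
    simpa using this
  have h2 := hasDerivAt_iff_tendsto_slope.1 h1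
  have h3 : Tendsto (slope (fun y : ℝ => 1 - Real.exp (-(a*y))) 0) (𝓝[>] 0) (𝓝 a) :=
    h2.mono_left (nhdsWithin_mono 0 (fun x hx => ne_of_gt hx))
  apply h3.congr'
  filter_upwards [self_mem_nhdsWithin] with s hs
  rw [slope_def_field]
  simp

lemma tendsto_Gf_zero {c : ℝ} (hc : 0 < c) :
    Tendsto (Gf c) (𝓝[>] 0) (𝓝 (Real.log c)) := by
  have key : ∀ᶠ s in 𝓝[>] (0:ℝ),
      Real.log ((1 - Real.exp (-(c*s)))/s) - Real.log ((1 - Real.exp (-s))/s) = Gf c s := by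
    filter_upwards [self_mem_nhdsWithin] with s hs
    have hs' : (0:ℝ) < s := hs
    have p1 := one_sub_exp_neg_pos hc hs'
    have p2 := one_sub_exp_neg_pos one_pos hs'
    have p2' : 0 < 1 - Real.exp (-s) := by simpa using p2
    rw [Real.log_div (ne_of_gt p1) (ne_of_gt hs'), Real.log_div (ne_of_gt p2') (ne_of_gt hs')]
    simp [Gf]
  have l1 : Tendsto (fun s => Real.log ((1 - Real.exp (-(c*s)))/s)) (𝓝[>] 0)
      (𝓝 (Real.log c)) :=
    ((Real.continuousAt_log (ne_of_gt hc)).tendsto).comp (tendsto_expm1_div hc)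
  have l2 : Tendsto (fun s => Real.log ((1 - Real.exp (-s))/s)) (𝓝[>] 0)
      (𝓝 (Real.log 1)) := by
    have := ((Real.continuousAt_log (ne_of_gt one_pos)).tendsto).comp (tendsto_expm1_div one_pos)
    simpa [Function.comp_def] using this
  have := l1.sub l2
  rw [Real.log_one, sub_zero] at this
  exact (Tendsto.congr' key this)

lemma Gf_superadd {c : ℝ} (hc : 1 ≤ c) {s t : ℝ} (hs : 0 < s) (ht : 0 < t) :
    Gf c s + Gf c t ≤ Real.log c + Gf c (s + t) := by
  have hc0 : 0 < c := lt_of_lt_of_le one_pos hc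
  set W : ℝ → ℝ := fun y => Gf c (y + t) - Gf c y with hW
  have hWd : ∀ y : ℝ, 0 < y → HasDerivAt W (g1 c (y+t) - g1 c y) y := by
    intro y hy
    have hy' : (0:ℝ) < y := hy
    have h1 : HasDerivAt (fun z => Gf c (z + t)) (g1 c (y+t)) y := by
      have := (hasDerivAt_Gf hc0 (by linarith : 0 < y + t)).comp y
        ((hasDerivAt_id y).add_const t)
      simpa [Function.comp_def] using this
    exact h1.sub (hasDerivAt_Gf hc0 hy)
  have hWmono : MonotoneOn W (Ioi 0) := by
    apply monotoneOn_of_deriv_nonneg (convex_Ioi 0)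
    · exact fun y hy => (hWd y hy).continuousAt.continuousWithinAt
    · intro y hy; rw [interior_Ioi] at hy
      exact (hWd y hy).differentiableAt.differentiableWithinAt
    · intro y hy; rw [interior_Ioi] at hy
      have hy0 : (0:ℝ) < y := hy
      rw [(hWd y hy0).deriv, sub_nonneg]
      exact g1_mono hc (mem_Ioi.2 hy0) (mem_Ioi.2 (by linarith)) (by linarith)
  have hlim : Tendsto W (𝓝[>] 0) (𝓝 (Gf c t - Real.log c)) := by
    have l1 : Tendsto (fun y => Gf c (y + t)) (𝓝[>] 0) (𝓝 (Gf c t)) := by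
      have hcont : ContinuousAt (Gf c) t := (hasDerivAt_Gf hc0 ht).continuousAt
      have ladd : Tendsto (fun y : ℝ => y + t) (𝓝[>] 0) (𝓝 t) := by
        have : Tendsto (fun y : ℝ => y + t) (𝓝 0) (𝓝 (0 + t)) :=
          (continuous_id.add continuous_const).tendsto 0
        rw [zero_add] at this
        exact this.mono_left nhdsWithin_le_nhds
      exact hcont.tendsto.comp ladd
    exact l1.sub (tendsto_Gf_zero hc0)
  have hle : Gf c t - Real.log c ≤ W s := by
    apply le_of_tendsto hlim
    filter_upwards [Ioc_mem_nhdsGT hs] with y hy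
    exact hWmono (mem_Ioi.2 hy.1) (mem_Ioi.2 hs) hy.2
  simp only [hW] at hle
  linarith

/-- the core inequality -/
lemma core_ineq {c : ℝ} (hc : 1 ≤ c) {u v : ℝ} (hu0 : 0 < u) (hu1 : u < 1)
    (hv0 : 0 < v) (hv1 : v < 1) :
    (1 - u ^ c) / (c * (1 - u)) * ((1 - v ^ c) / (c * (1 - v)))
      ≤ (1 - (u*v) ^ c) / (c * (1 - u*v)) := by
  have hc0 : 0 < c := lt_of_lt_of_le one_pos hc
  set s := -Real.log u with hsdef
  set t := -Real.log v with htdef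
  have hs : 0 < s := by
    simp only [hsdef, neg_pos]
    exact Real.log_neg hu0 hu1
  have ht : 0 < t := by
    simp only [htdef, neg_pos]
    exact Real.log_neg hv0 hv1
  have hue : u = Real.exp (-s) := by rw [hsdef, neg_neg, Real.exp_log hu0]
  have hve : v = Real.exp (-t) := by rw [htdef, neg_neg, Real.exp_log hv0]
  have ratio : ∀ w : ℝ, 0 < w → (1 - Real.exp (-w) ^ c) / (1 - Real.exp (-w))
      = Real.exp (Gf c w) := by
    intro w hw
    have hrc : Real.exp (-w) ^ c = Real.exp (-(c*w)) := by
      rw [← Real.exp_mul]; ring_nf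
    rw [hrc, Gf, Real.exp_sub, Real.exp_log (one_sub_exp_neg_pos hc0 hw),
      Real.exp_log (by simpa using one_sub_exp_neg_pos one_pos hw)]
  have huv : u * v = Real.exp (-(s+t)) := by
    rw [hue, hve, ← Real.exp_add]; ring_nf
  have hst : 0 < s + t := by linarith
  have key := Gf_superadd hc hs ht
  -- rewrite each side
  have lhs_eq : (1 - u ^ c) / (c * (1 - u)) * ((1 - v ^ c) / (c * (1 - v)))
      = Real.exp (Gf c s) / c * (Real.exp (Gf c t) / c) := by
    rw [hue, hve]
    rw [show (1 - Real.exp (-s) ^ c) / (c * (1 - Real.exp (-s)))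
        = (1 - Real.exp (-s) ^ c) / (1 - Real.exp (-s)) / c by
      rw [div_div]; ring_nf]
    rw [show (1 - Real.exp (-t) ^ c) / (c * (1 - Real.exp (-t)))
        = (1 - Real.exp (-t) ^ c) / (1 - Real.exp (-t)) / c by
      rw [div_div]; ring_nf]
    rw [ratio s hs, ratio t ht]
  have rhs_eq : (1 - (u*v) ^ c) / (c * (1 - u*v)) = Real.exp (Gf c (s+t)) / c := by
    rw [huv]
    rw [show (1 - Real.exp (-(s+t)) ^ c) / (c * (1 - Real.exp (-(s+t))))
        = (1 - Real.exp (-(s+t)) ^ c) / (1 - Real.exp (-(s+t))) / c by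
      rw [div_div]; ring_nf]
    rw [ratio _ hst]
  rw [lhs_eq, rhs_eq]
  rw [div_mul_div_comm, div_le_div_iff₀ (by positivity) (by positivity), ← Real.exp_add]
  calc Real.exp (Gf c s + Gf c t) * c ≤ Real.exp (Real.log c + Gf c (s+t)) * c := by
        have := Real.exp_le_exp.2 key
        nlinarith [Real.exp_pos (Gf c s + Gf c t), Real.exp_pos (Real.log c + Gf c (s+t))]
      _ = Real.exp (Gf c (s+t)) * (c * c) := by
        rw [Real.exp_add, Real.exp_log hc0]; ring



noncomputable def ES (w : ℕ → ℝ) (r x : ℝ) : ℝ := ∑' n : ℕ, w n * r ^ (((n:ℝ)+1) * x)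

def PB (w : ℕ → ℝ) : Prop := ∃ C : ℝ, ∃ k : ℕ, ∀ n : ℕ, |w n| ≤ C * ((n:ℝ)+1)^k

lemma PB.of_bound {w : ℕ → ℝ} (C : ℝ) (h : ∀ n, |w n| ≤ C) : PB w := by
  refine ⟨C + 1, 1, fun n => ?_⟩
  have h1 : (1:ℝ) ≤ ((n:ℝ)+1)^1 := by
    rw [pow_one]; exact le_add_of_nonneg_left (Nat.cast_nonneg n)
  have h1' : (0:ℝ) ≤ ((n:ℝ)+1)^1 := by positivity
  have hC : 0 ≤ C := le_trans (abs_nonneg _) (h 0)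
  calc |w n| ≤ C := h n
    _ ≤ (C+1) * 1 := by linarith
    _ ≤ (C+1) * ((n:ℝ)+1)^1 := by nlinarith

lemma PB.mul_linear {w : ℕ → ℝ} (hw : PB w) (d : ℝ) :
    PB (fun n => (((n:ℝ)+1) * d) * w n) := by
  obtain ⟨C, k, hC⟩ := hw
  refine ⟨|d| * C, k + 1, fun n => ?_⟩
  have hn1 : (0:ℝ) < (n:ℝ)+1 := by positivity
  have := hC n
  calc |(((n:ℝ)+1) * d) * w n| = ((n:ℝ)+1) * |d| * |w n| := by
        rw [abs_mul, abs_mul, abs_of_pos hn1]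
    _ ≤ ((n:ℝ)+1) * |d| * (C * ((n:ℝ)+1)^k) := by
        apply mul_le_mul_of_nonneg_left (hC n) (by positivity)
    _ = |d| * C * ((n:ℝ)+1)^(k+1) := by ring

lemma PB.abs {w : ℕ → ℝ} (hw : PB w) : PB (fun n => |w n|) := by
  obtain ⟨C, k, hC⟩ := hw
  exact ⟨C, k, fun n => by simpa using hC n⟩

lemma PB.sub {w v : ℕ → ℝ} (hw : PB w) (hv : PB v) : PB (fun n => w n - v n) := by
  obtain ⟨C, k, hC⟩ := hw
  obtain ⟨D, l, hD⟩ := hv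
  have hC0 : 0 ≤ C := by
    have := le_trans (abs_nonneg _) (hC 0)
    simpa using this
  have hD0 : 0 ≤ D := by
    have := le_trans (abs_nonneg _) (hD 0)
    simpa using this
  refine ⟨C + D, k + l, fun n => ?_⟩
  have hb : (1:ℝ) ≤ (n:ℝ)+1 := le_add_of_nonneg_left (Nat.cast_nonneg n)
  have h1 : ((n:ℝ)+1)^k ≤ ((n:ℝ)+1)^(k+l) := pow_le_pow_right₀ hb (Nat.le_add_right k l)
  have h2 : ((n:ℝ)+1)^l ≤ ((n:ℝ)+1)^(k+l) := pow_le_pow_right₀ hb (Nat.le_add_left l k)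
  calc |w n - v n| ≤ |w n| + |v n| := abs_sub _ _
    _ ≤ C * ((n:ℝ)+1)^k + D * ((n:ℝ)+1)^l := add_le_add (hC n) (hD n)
    _ ≤ C * ((n:ℝ)+1)^(k+l) + D * ((n:ℝ)+1)^(k+l) := by
        apply add_le_add (mul_le_mul_of_nonneg_left h1 hC0) (mul_le_mul_of_nonneg_left h2 hD0)
    _ = (C + D) * ((n:ℝ)+1)^(k+l) := by ring

lemma PB.add {w v : ℕ → ℝ} (hw : PB w) (hv : PB v) : PB (fun n => w n + v n) := by
  have hnegv : PB (fun n => -(v n)) := by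
    obtain ⟨C, k, hC⟩ := hv
    exact ⟨C, k, fun n => by rw [abs_neg]; exact hC n⟩
  have h2 := hw.sub hnegv
  obtain ⟨C, k, hC⟩ := h2
  refine ⟨C, k, fun n => ?_⟩
  have := hC n
  simpa [sub_neg_eq_add] using this

lemma PB.const_mul {w : ℕ → ℝ} (hw : PB w) (d : ℝ) : PB (fun n => d * w n) := by
  obtain ⟨C, k, hC⟩ := hw
  refine ⟨|d| * C, k, fun n => ?_⟩
  rw [abs_mul, mul_assoc]
  exact mul_le_mul_of_nonneg_left (hC n) (abs_nonneg d)

section Ser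

variable {r : ℝ} (hr0 : 0 < r) (hr1 : r < 1)

include hr0 in
lemma term_eq (n : ℕ) (x : ℝ) : r ^ (((n:ℝ)+1) * x) = (r ^ x) ^ (n+1) := by
  rw [mul_comm, Real.rpow_mul hr0.le]
  rw [show ((n:ℝ)+1) = ((n+1:ℕ):ℝ) by push_cast; ring, Real.rpow_natCast]

lemma summable_aux (C : ℝ) (k : ℕ) {ρ : ℝ} (h0 : 0 ≤ ρ) (h1 : ρ < 1) :
    Summable (fun n : ℕ => C * (((n:ℝ)+1)^k * ρ^(n+1))) := by
  have h : Summable (fun n : ℕ => (n:ℝ)^k * ρ^n) := by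
    have := summable_pow_mul_geometric_of_norm_lt_one (R := ℝ) k
      (r := ρ) (by rwa [Real.norm_eq_abs, abs_of_nonneg h0])
    exact this
  have h2 : Summable (fun n : ℕ => ((n+1:ℕ):ℝ)^k * ρ^(n+1)) := (summable_nat_add_iff 1).2 h
  apply Summable.mul_left
  apply h2.congr
  intro n
  push_cast
  ring

include hr0 hr1 in
lemma summable_term {w : ℕ → ℝ} (hw : PB w) {x : ℝ} (hx : 0 < x) :
    Summable (fun n => w n * r ^ (((n:ℝ)+1) * x)) := by
  obtain ⟨C, k, hC⟩ := hw
  set ρ := r ^ x with hρ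
  have hρ0 : 0 ≤ ρ := Real.rpow_nonneg hr0.le x
  have hρ1 : ρ < 1 := Real.rpow_lt_one hr0.le hr1 hx
  apply Summable.of_norm
  refine Summable.of_nonneg_of_le (fun n => norm_nonneg _) (fun n => ?_)
    (summable_aux C k hρ0 hρ1)
  · rw [Real.norm_eq_abs, abs_mul, term_eq hr0 n x]
    have h1 : |r ^ x| = ρ := by rw [abs_of_nonneg hρ0]
    have h2 : |(r^x)^(n+1)| = ρ^(n+1) := by rw [abs_pow, h1]
    rw [h2]
    have := hC n
    have h3 : (0:ℝ) ≤ ρ^(n+1) := by positivity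
    calc |w n| * ρ^(n+1) ≤ (C * ((n:ℝ)+1)^k) * ρ^(n+1) :=
          mul_le_mul_of_nonneg_right (hC n) h3
      _ = C * (((n:ℝ)+1)^k * ρ^(n+1)) := by ring

include hr0 in
lemma hasDerivAt_rpow_lin (a y : ℝ) :
    HasDerivAt (fun z : ℝ => r ^ (a*z)) ((a * Real.log r) * r ^ (a*y)) y := by
  have h1 : ∀ z : ℝ, r ^ (a*z) = Real.exp ((Real.log r * a) * z) := by
    intro z
    rw [Real.rpow_def_of_pos hr0]
    ring_nf
  have hi : HasDerivAt (fun z : ℝ => (Real.log r * a) * z) (Real.log r * a) y := by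
    simpa using (hasDerivAt_id y).const_mul (Real.log r * a)
  have h2 := (Real.hasDerivAt_exp ((Real.log r * a) * y)).comp y hi
  have h3 : HasDerivAt (fun z : ℝ => r ^ (a*z))
      (Real.exp (Real.log r * a * y) * (Real.log r * a)) y := by
    apply HasDerivAt.congr_of_eventuallyEq h2
    filter_upwards with z
    rw [h1 z]
    simp [Function.comp]
  have h4 : Real.exp (Real.log r * a * y) * (Real.log r * a) = (a * Real.log r) * r ^ (a*y) := by
    rw [← h1 y]; ring
  rwa [h4] at h3

include hr0 hr1 in
lemma hasDerivAt_ES {w : ℕ → ℝ} (hw : PB w) {x : ℝ} (hx : 0 < x) :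
    HasDerivAt (ES w r) (ES (fun n => (((n:ℝ)+1) * Real.log r) * w n) r x) x := by
  set w' : ℕ → ℝ := fun n => (((n:ℝ)+1) * Real.log r) * w n with hw'def
  have hw' : PB w' := hw.mul_linear (Real.log r)
  have key := hasDerivAt_tsum_of_isPreconnected
    (u := fun n => |w' n| * r ^ (((n:ℝ)+1) * (x/2)))
    (g := fun n z => w n * r ^ (((n:ℝ)+1) * z))
    (g' := fun n z => w' n * r ^ (((n:ℝ)+1) * z))
    (summable_term hr0 hr1 hw'.abs (by linarith : (0:ℝ) < x/2))
    (isOpen_Ioi (a := x/2)) (convex_Ioi (x/2)).isPreconnected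
    (fun n y _ => by
      have := (hasDerivAt_rpow_lin hr0 ((n:ℝ)+1) y).const_mul (w n)
      refine this.congr_deriv (Eq.symm ?_)
      ring)
    (fun n y hy => by
      rw [Real.norm_eq_abs, abs_mul]
      have hyx : x/2 ≤ y := le_of_lt hy
      have h1 : r ^ (((n:ℝ)+1) * y) ≤ r ^ (((n:ℝ)+1) * (x/2)) := by
        apply Real.rpow_le_rpow_of_exponent_ge hr0 (le_of_lt hr1)
        have : (0:ℝ) ≤ (n:ℝ)+1 := by positivity
        nlinarith
      have h2 : |r ^ (((n:ℝ)+1) * y)| = r ^ (((n:ℝ)+1) * y) :=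
        abs_of_nonneg (Real.rpow_nonneg hr0.le _)
      rw [h2]
      exact mul_le_mul_of_nonneg_left h1 (abs_nonneg _))
    (mem_Ioi.2 (by linarith : x/2 < x))
    (summable_term hr0 hr1 hw hx)
    (mem_Ioi.2 (by linarith : x/2 < x))
  exact key

end Ser






noncomputable def wIter (d : ℝ) (k : ℕ) (w : ℕ → ℝ) : ℕ → ℝ :=
  fun n => (((n:ℝ)+1) * d)^k * w n

lemma PB.congr {w v : ℕ → ℝ} (hw : PB w) (h : ∀ n, v n = w n) : PB v := by
  obtain ⟨C, k, hC⟩ := hw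
  exact ⟨C, k, fun n => by rw [h n]; exact hC n⟩

lemma PB.wIter {w : ℕ → ℝ} (hw : PB w) (d : ℝ) (k : ℕ) : PB (wIter d k w) := by
  induction k with
  | zero => exact hw.congr (fun n => by simp [QDG.wIter])
  | succ k ih =>
    have := ih.mul_linear d
    apply this.congr
    intro n
    simp only [QDG.wIter]
    ring

section Ser
variable {r : ℝ} (hr0 : 0 < r) (hr1 : r < 1) {w : ℕ → ℝ}

include hr0 hr1 in
lemma iter_ES (hw : PB w) (k : ℕ) :
    ∀ x ∈ Ioi (0:ℝ), iteratedDerivWithin k (ES w r) (Ioi 0) x = ES (wIter (Real.log r) k w) r x := by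
  induction k with
  | zero =>
    intro x hx
    rw [iteratedDerivWithin_zero]
    unfold ES
    apply tsum_congr
    intro n
    simp [QDG.wIter]
  | succ k ih =>
    intro x hx
    have hUD : UniqueDiffWithinAt ℝ (Ioi (0:ℝ)) x := (uniqueDiffOn_Ioi 0) x hx
    rw [iteratedDerivWithin_succ]
    have h1 : derivWithin (iteratedDerivWithin k (ES w r) (Ioi 0)) (Ioi 0) x
        = derivWithin (ES (wIter (Real.log r) k w) r) (Ioi 0) x :=
      derivWithin_congr (fun y hy => ih y hy) (ih x hx)
    rw [h1, derivWithin_of_isOpen isOpen_Ioi hx]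
    have h2 := (hasDerivAt_ES hr0 hr1 (hw.wIter (Real.log r) k) hx).deriv
    rw [h2]
    unfold ES
    apply tsum_congr
    intro n
    simp only [QDG.wIter]
    ring_nf

include hr0 hr1 in
lemma ES_nonneg_alt (hw : PB w) (hnn : ∀ n, 0 ≤ w n) (k : ℕ) {x : ℝ} (hx : 0 < x) :
    0 ≤ (-1:ℝ)^k * ES (wIter (Real.log r) k w) r x := by
  unfold ES
  rw [← tsum_mul_left]
  apply tsum_nonneg
  intro n
  have hL : Real.log r < 0 := Real.log_neg hr0 hr1
  have e1 : (((n:ℝ)+1) * (-Real.log r))^k = (-1:ℝ)^k * ((((n:ℝ)+1)) * Real.log r)^k := by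
    rw [← mul_pow]
    congr 1
    ring
  have key : (-1:ℝ)^k * (wIter (Real.log r) k w n * r ^ (((n:ℝ)+1) * x))
      = (((n:ℝ)+1) * (-Real.log r))^k * w n * r ^ (((n:ℝ)+1) * x) := by
    simp only [QDG.wIter]
    rw [e1]
    ring
  rw [key]
  have h1 : (0:ℝ) ≤ ((n:ℝ)+1) * (-Real.log r) := by
    have : (0:ℝ) ≤ -Real.log r := by linarith
    positivity
  have h2 : (0:ℝ) ≤ r ^ (((n:ℝ)+1) * x) := Real.rpow_nonneg hr0.le _
  have := hnn n
  positivity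

noncomputable def ESC (w : ℕ → ℝ) (r : ℝ) (z : ℂ) : ℂ :=
  ∑' n : ℕ, (w n : ℂ) * Complex.exp (((((n:ℝ)+1) * Real.log r : ℝ)) * z)

include hr0 hr1 in
lemma analyticOn_ES (hw : PB w) : AnalyticOn ℝ (ES w r) (Ioi 0) := by
  intro x hx
  have hx0 : (0:ℝ) < x := hx
  set ε := x/2 with hε
  have hε0 : 0 < ε := by positivity
  set U : Set ℂ := {z : ℂ | ε < z.re} with hU
  have hUopen : IsOpen U := isOpen_lt continuous_const Complex.continuous_re
  have hL : Real.log r < 0 := Real.log_neg hr0 hr1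
  -- derivative of each complex term
  have hterm : ∀ n : ℕ, ∀ z : ℂ, HasDerivAt
      (fun z => (w n : ℂ) * Complex.exp (((((n:ℝ)+1) * Real.log r : ℝ)) * z))
      (((((n:ℝ)+1) * Real.log r) * w n : ℝ) * Complex.exp (((((n:ℝ)+1) * Real.log r : ℝ)) * z)) z := by
    intro n z
    have hi : HasDerivAt (fun z : ℂ => ((((n:ℝ)+1) * Real.log r : ℝ) : ℂ) * z)
        ((((n:ℝ)+1) * Real.log r : ℝ) : ℂ) z := by
      simpa using (hasDerivAt_id z).const_mul ((((n:ℝ)+1) * Real.log r : ℝ) : ℂ)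
    have := ((Complex.hasDerivAt_exp _).comp z hi).const_mul (w n : ℂ)
    refine this.congr_deriv (Eq.symm ?_)
    push_cast
    ring
  -- norm bound for terms
  have hnorm : ∀ n : ℕ, ∀ z ∈ U,
      ‖((((n:ℝ)+1) * Real.log r) * w n : ℝ) * Complex.exp (((((n:ℝ)+1) * Real.log r : ℝ)) * z)‖
      ≤ |(((n:ℝ)+1) * Real.log r) * w n| * r ^ (((n:ℝ)+1) * ε) := by
    intro n z hz
    rw [norm_mul, Complex.norm_real, Real.norm_eq_abs]
    apply mul_le_mul_of_nonneg_left _ (abs_nonneg _)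
    rw [Complex.norm_exp]
    have h2 : (((((n:ℝ)+1) * Real.log r : ℝ) : ℂ) * z).re = (((n:ℝ)+1) * Real.log r) * z.re := by
      simp
    rw [h2]
    have h3 : r ^ (((n:ℝ)+1) * ε) = Real.exp ((((n:ℝ)+1) * Real.log r) * ε) := by
      rw [Real.rpow_def_of_pos hr0]; ring_nf
    rw [h3, Real.exp_le_exp]
    have hzre : ε < z.re := hz
    have hn1 : (0:ℝ) < (n:ℝ)+1 := by positivity
    have hc0 : ((n:ℝ)+1) * Real.log r ≤ 0 := le_of_lt (mul_neg_of_pos_of_neg hn1 hL)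
    exact mul_le_mul_of_nonpos_left (le_of_lt hzre) hc0
  -- differentiability of complex sum on U
  have hdiff : DifferentiableOn ℂ (ESC w r) U := by
    intro z hz
    have key := hasDerivAt_tsum_of_isPreconnected
      (u := fun (n : ℕ) => |(((n:ℝ)+1) * Real.log r) * w n| * r ^ (((n:ℝ)+1) * ε))
      (g := fun (n : ℕ) (z : ℂ) => (w n : ℂ) * Complex.exp (((((n:ℝ)+1) * Real.log r : ℝ)) * z))
      (g' := fun (n : ℕ) (z : ℂ) => (((((n:ℝ)+1) * Real.log r) * w n : ℝ)) * Complex.exp (((((n:ℝ)+1) * Real.log r : ℝ)) * z))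
      (summable_term hr0 hr1 (hw.mul_linear (Real.log r)).abs hε0)
      hUopen (convex_halfSpace_re_gt ε).isPreconnected
      (fun n y _ => hterm n y)
      (fun n y hy => hnorm n y hy)
      (show ((x:ℂ)) ∈ U by simp [hU, hε]; linarith)
      (by
        -- summability at the real point x
        have hval : ∀ n : ℕ, |w n| * r ^ (((n:ℝ)+1) * x)
            = ‖(w n : ℂ) * Complex.exp (((((n:ℝ)+1) * Real.log r : ℝ)) * (x:ℂ))‖ := by
          intro n
          rw [norm_mul, Complex.norm_real, Real.norm_eq_abs,
            Complex.norm_exp]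
          congr 1
          have h2 : (((((n:ℝ)+1) * Real.log r : ℝ) : ℂ) * (x:ℂ)).re
              = (((n:ℝ)+1) * Real.log r) * x := by simp
          rw [h2, Real.rpow_def_of_pos hr0]
          congr 1
          ring
        apply Summable.of_norm
        exact ((summable_term hr0 hr1 hw.abs hx0).congr hval)
      )
      hz
    exact (key.differentiableAt).differentiableWithinAt
  have hAnal : AnalyticOnNhd ℂ (ESC w r) U := hdiff.analyticOnNhd hUopen
  have A1 : AnalyticAt ℂ (ESC w r) (x:ℂ) := hAnal _ (by simp [hU, hε]; linarith)
  have A2 : AnalyticAt ℝ (ESC w r) (x:ℂ) := A1.restrictScalars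
  have A3 : AnalyticAt ℝ (fun t : ℝ => ESC w r (t:ℂ)) x :=
    A2.comp (Complex.ofRealCLM.analyticAt x)
  have A4 : AnalyticAt ℝ (fun t : ℝ => (ESC w r (t:ℂ)).re) x :=
    (Complex.reCLM.analyticAt _).comp A3
  have A5 : (fun t : ℝ => (ESC w r (t:ℂ)).re) =ᶠ[𝓝 x] ES w r := by
    filter_upwards [isOpen_Ioi.mem_nhds hx] with t ht
    have ht0 : (0:ℝ) < t := ht
    have hsum := summable_term hr0 hr1 hw ht0
    have : ESC w r (t:ℂ) = ((ES w r t : ℝ) : ℂ) := by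
      unfold ESC ES
      rw [Complex.ofReal_tsum]
      apply tsum_congr
      intro n
      rw [show ((((n:ℝ)+1) * Real.log r : ℝ) : ℂ) * (t:ℂ)
          = (((Real.log r * ((((n:ℝ)+1)) * t)) : ℝ) : ℂ) by push_cast; ring]
      rw [← Complex.ofReal_exp, Real.rpow_def_of_pos hr0, ← Complex.ofReal_mul]
    rw [this]
    simp
  exact (A4.congr A5).analyticWithinAt

include hr0 hr1 in
lemma completelyMonotoneOn_ES (hw : PB w) (hnn : ∀ n, 0 ≤ w n) :
    CompletelyMonotoneOn (ES w r) (Ioi 0) := by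
  constructor
  · exact ((contDiffOn_omega_iff_analyticOn (uniqueDiffOn_Ioi 0)).2 (analyticOn_ES hr0 hr1 hw)).of_le le_top
  · intro k x hx
    rw [iter_ES hr0 hr1 hw k x hx]
    exact ES_nonneg_alt hr0 hr1 hw hnn k hx

end Ser



noncomputable def ES2 (v : ℕ → ℝ) (r x : ℝ) : ℝ := ∑' n : ℕ, v n * r ^ (((n:ℝ)+2) * x)

def shiftW (v : ℕ → ℝ) : ℕ → ℝ := fun n => Nat.rec 0 (fun k _ => v k) n

@[simp] lemma shiftW_zero (v : ℕ → ℝ) : shiftW v 0 = 0 := rfl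
@[simp] lemma shiftW_succ (v : ℕ → ℝ) (n : ℕ) : shiftW v (n+1) = v n := rfl


lemma PB.nonneg_const {w : ℕ → ℝ} (hw : PB w) :
    ∃ C : ℝ, 0 ≤ C ∧ ∃ k : ℕ, ∀ n : ℕ, |w n| ≤ C * ((n:ℝ)+1)^k := by
  obtain ⟨C, k, hC⟩ := hw
  refine ⟨C, ?_, k, hC⟩
  have := le_trans (abs_nonneg _) (hC 0)
  simpa using this

lemma PB.shift {v : ℕ → ℝ} (hv : PB v) : PB (shiftW v) := by
  obtain ⟨C, hC0, k, hC⟩ := hv.nonneg_const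
  refine ⟨C, k, fun n => ?_⟩
  cases n with
  | zero => simp; positivity
  | succ m =>
    rw [shiftW_succ]
    calc |v m| ≤ C * ((m:ℝ)+1)^k := hC m
      _ ≤ C * ((↑(m+1):ℝ)+1)^k := by
          apply mul_le_mul_of_nonneg_left _ hC0
          apply pow_le_pow_left₀ (by positivity)
          push_cast; linarith

lemma PB.succ {w : ℕ → ℝ} (hw : PB w) : PB (fun n => w (n+1)) := by
  obtain ⟨C, hC0, k, hC⟩ := hw.nonneg_const
  refine ⟨C * 2^k, k, fun n => ?_⟩
  calc |w (n+1)| ≤ C * ((↑(n+1):ℝ)+1)^k := hC (n+1)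
    _ ≤ C * (2*((n:ℝ)+1))^k := by
        apply mul_le_mul_of_nonneg_left _ hC0
        apply pow_le_pow_left₀ (by positivity)
        push_cast; linarith
    _ = C * 2^k * ((n:ℝ)+1)^k := by rw [mul_pow]; ring

lemma PB.antidiagSum {w v : ℕ → ℝ} (hw : PB w) (hv : PB v) :
    PB (fun n => ∑ p ∈ antidiagonal n, w p.1 * v p.2) := by
  obtain ⟨C, hC0, k, hC⟩ := hw.nonneg_const
  obtain ⟨D, hD0, l, hD⟩ := hv.nonneg_const
  refine ⟨C * D, k + l + 1, fun n => ?_⟩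
  have hb : ∀ p : ℕ × ℕ, p ∈ antidiagonal n → |w p.1 * v p.2| ≤ C * D * ((n:ℝ)+1)^(k+l) := by
    intro p hp
    have hpn := Finset.HasAntidiagonal.mem_antidiagonal.1 hp
    have h1 : ((p.1:ℝ)+1) ≤ ((n:ℝ)+1) := by
      have : p.1 ≤ n := by omega
      push_cast; exact_mod_cast by exact_mod_cast add_le_add_left (Nat.cast_le.2 this) 1
    have h2 : ((p.2:ℝ)+1) ≤ ((n:ℝ)+1) := by
      have : p.2 ≤ n := by omega
      exact add_le_add_left (Nat.cast_le.2 this) 1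
    rw [abs_mul]
    calc |w p.1| * |v p.2| ≤ (C * ((p.1:ℝ)+1)^k) * (D * ((p.2:ℝ)+1)^l) := by
          apply mul_le_mul (hC p.1) (hD p.2) (abs_nonneg _) (by positivity)
      _ ≤ (C * ((n:ℝ)+1)^k) * (D * ((n:ℝ)+1)^l) := by
          apply mul_le_mul
          · exact mul_le_mul_of_nonneg_left (pow_le_pow_left₀ (by positivity) h1 k) hC0
          · exact mul_le_mul_of_nonneg_left (pow_le_pow_left₀ (by positivity) h2 l) hD0
          · positivity
          · positivity
      _ = C * D * ((n:ℝ)+1)^(k+l) := by rw [pow_add]; ring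
  calc |∑ p ∈ antidiagonal n, w p.1 * v p.2| ≤ ∑ p ∈ antidiagonal n, |w p.1 * v p.2| :=
        Finset.abs_sum_le_sum_abs _ _
    _ ≤ ∑ _p ∈ antidiagonal n, C * D * ((n:ℝ)+1)^(k+l) := Finset.sum_le_sum hb
    _ = ((n:ℝ)+1) * (C * D * ((n:ℝ)+1)^(k+l)) := by
        rw [Finset.sum_const, Finset.Nat.card_antidiagonal]
        push_cast; ring
    _ = C * D * ((n:ℝ)+1)^(k+l+1) := by rw [pow_succ]; ring

section Alg
variable {r : ℝ} (hr0 : 0 < r) (hr1 : r < 1) {w v : ℕ → ℝ} {x c : ℝ}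

include hr0 hr1 in
lemma ES_sub (hw : PB w) (hv : PB v) (hx : 0 < x) :
    ES w r x - ES v r x = ES (fun n => w n - v n) r x := by
  unfold ES
  rw [← Summable.tsum_sub (summable_term hr0 hr1 hw hx) (summable_term hr0 hr1 hv hx)]
  apply tsum_congr
  intro n
  ring

lemma ES_const_mul (d : ℝ) : d * ES w r x = ES (fun n => d * w n) r x := by
  unfold ES
  rw [← tsum_mul_left]
  apply tsum_congr
  intro n
  ring

include hr0 hr1 in
lemma ES_shifted (hv : PB v) (hx : 0 < x) : ES (shiftW v) r x = ES2 v r x := by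
  rw [ES, Summable.tsum_eq_zero_add (summable_term hr0 hr1 hv.shift hx)]
  simp only [shiftW_zero, zero_mul, zero_add, shiftW_succ]
  apply tsum_congr
  intro n
  congr 2
  push_cast
  ring

include hr0 hr1 in
lemma ES_fdiff (hw : PB w) (hx : 0 < x) (hc : 0 < c) :
    (ES w r (x+c) - ES w r x)/c = ES (fun n => w n * ((r ^ (((n:ℝ)+1)*c) - 1)/c)) r x := by
  have hplus : ES w r (x+c) = ES (fun n => w n * r ^ (((n:ℝ)+1)*c)) r x := by
    unfold ES
    apply tsum_congr
    intro n
    rw [show ((n:ℝ)+1) * (x+c) = ((n:ℝ)+1)*c + ((n:ℝ)+1)*x by ring, Real.rpow_add hr0]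
    ring
  have hwc : PB (fun n => w n * r ^ (((n:ℝ)+1)*c)) := by
    obtain ⟨C, hC0, k, hC⟩ := hw.nonneg_const
    refine ⟨C, k, fun n => ?_⟩
    rw [abs_mul]
    have h1 : |r ^ (((n:ℝ)+1)*c)| ≤ 1 := by
      rw [abs_of_nonneg (Real.rpow_nonneg hr0.le _)]
      apply Real.rpow_le_one hr0.le (le_of_lt hr1) (by positivity)
    calc |w n| * |r ^ (((n:ℝ)+1)*c)| ≤ |w n| * 1 :=
          mul_le_mul_of_nonneg_left h1 (abs_nonneg _)
      _ = |w n| := mul_one _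
      _ ≤ C * ((n:ℝ)+1)^k := hC n
  rw [hplus, ES_sub hr0 hr1 hwc hw hx]
  unfold ES
  rw [← tsum_div_const]
  apply tsum_congr
  intro n
  ring

include hr0 hr1 in
lemma ES_mul (hw : PB w) (hv : PB v) (hx : 0 < x) :
    ES w r x * ES v r x
      = ES2 (fun n => ∑ p ∈ antidiagonal n, w p.1 * v p.2) r x := by
  unfold ES ES2
  have hsw : Summable fun n => ‖w n * r ^ (((n:ℝ)+1) * x)‖ :=
    ((summable_term hr0 hr1 hw hx).abs).congr (fun n => (Real.norm_eq_abs _).symm)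
  have hsv : Summable fun n => ‖v n * r ^ (((n:ℝ)+1) * x)‖ :=
    ((summable_term hr0 hr1 hv hx).abs).congr (fun n => (Real.norm_eq_abs _).symm)
  rw [tsum_mul_tsum_eq_tsum_sum_antidiagonal_of_summable_norm hsw hsv]
  apply tsum_congr
  intro n
  have hterm : ∀ p ∈ antidiagonal n,
      (w p.1 * r ^ (((p.1:ℝ)+1) * x)) * (v p.2 * r ^ (((p.2:ℝ)+1) * x))
        = (w p.1 * v p.2) * r ^ (((n:ℝ)+2) * x) := by
    intro p hp
    have hpn : p.1 + p.2 = n := Finset.HasAntidiagonal.mem_antidiagonal.1 hp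
    calc (w p.1 * r ^ (((p.1:ℝ)+1) * x)) * (v p.2 * r ^ (((p.2:ℝ)+1) * x))
        = (w p.1 * v p.2) * (r ^ (((p.1:ℝ)+1) * x) * r ^ (((p.2:ℝ)+1) * x)) := by ring
      _ = (w p.1 * v p.2) * r ^ (((n:ℝ)+2) * x) := by
          rw [← Real.rpow_add hr0,
            show (((p.1:ℝ)+1)*x + ((p.2:ℝ)+1)*x) = ((n:ℝ)+2)*x by
              rw [← hpn]; push_cast; ring]
  rw [Finset.sum_congr rfl hterm, ← Finset.sum_mul]

end Alg

noncomputable def bW (r c : ℝ) : ℕ → ℝ :=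
  fun n => (1 - r ^ (((n:ℝ)+1)*c)) / (c * (1 - r ^ ((n:ℝ)+1)))

noncomputable def b1W (r c : ℝ) : ℕ → ℝ := fun n => ((n:ℝ)+1) * bW r c n
noncomputable def b2W (r c : ℝ) : ℕ → ℝ := fun n => (((n:ℝ)+1) * ((n:ℝ)+1)) * bW r c n

noncomputable def EW (r c : ℝ) : ℕ → ℝ :=
  fun n => ((n:ℝ)+1) * bW r c (n+1) - ∑ p ∈ antidiagonal n, bW r c p.1 * bW r c p.2

section BW
variable {r c : ℝ} (hr0 : 0 < r) (hr1 : r < 1) (hc : 1 < c)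

lemma f_pos {u : ℝ} (hu0 : 0 < u) (hu1 : u < 1) (hc0 : 0 < c) :
    0 < (1 - u ^ c) / (c * (1 - u)) := by
  apply div_pos
  · have : u ^ c < 1 := Real.rpow_lt_one hu0.le hu1 hc0
    linarith
  · have : 0 < 1 - u := by linarith
    positivity

lemma f_le_one {u : ℝ} (hu0 : 0 < u) (hu1 : u < 1) (hc1 : 1 ≤ c) :
    (1 - u ^ c) / (c * (1 - u)) ≤ 1 := by
  have hc0 : 0 < c := lt_of_lt_of_le one_pos hc1
  rw [div_le_one (mul_pos hc0 (by linarith : (0:ℝ) < 1 - u))]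
  have hbern : 1 + c * (u - 1) ≤ (1 + (u - 1)) ^ c :=
    one_add_mul_self_le_rpow_one_add (by linarith) hc1
  rw [show (1 : ℝ) + (u - 1) = u by ring] at hbern
  linarith

include hr0 hr1 in
lemma bW_eq (n : ℕ) : bW r c n
    = (1 - (r ^ ((n:ℝ)+1)) ^ c) / (c * (1 - r ^ ((n:ℝ)+1))) := by
  rw [bW, Real.rpow_mul hr0.le]

include hr0 hr1 in
lemma u_mem (n : ℕ) : 0 < r ^ ((n:ℝ)+1) ∧ r ^ ((n:ℝ)+1) < 1 :=
  ⟨Real.rpow_pos_of_pos hr0 _, Real.rpow_lt_one hr0.le hr1 (by positivity)⟩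

include hr0 hr1 hc in
lemma bW_pos (n : ℕ) : 0 < bW r c n := by
  rw [bW_eq hr0 hr1]
  exact f_pos (u_mem hr0 hr1 n).1 (u_mem hr0 hr1 n).2 (lt_trans one_pos hc)

include hr0 hr1 hc in
lemma bW_le_one (n : ℕ) : bW r c n ≤ 1 := by
  rw [bW_eq hr0 hr1]
  exact f_le_one (u_mem hr0 hr1 n).1 (u_mem hr0 hr1 n).2 hc.le

include hr0 hr1 hc in
lemma bW_PB : PB (bW r c) :=
  PB.of_bound 1 (fun n => by
    rw [abs_of_pos (bW_pos hr0 hr1 hc n)]; exact bW_le_one hr0 hr1 hc n)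

include hr0 hr1 hc in
lemma b1W_PB : PB (b1W r c) := by
  have := (bW_PB hr0 hr1 hc).mul_linear 1
  apply this.congr
  intro n
  rw [b1W]
  ring

include hr0 hr1 hc in
lemma b2W_PB : PB (b2W r c) := by
  have := ((bW_PB hr0 hr1 hc).mul_linear 1).mul_linear 1
  apply this.congr
  intro n
  rw [b2W]
  ring

include hr0 hr1 hc in
lemma bW_mul_le (j k : ℕ) : bW r c j * bW r c k ≤ bW r c (j+k+1) := by
  have hu := u_mem hr0 hr1 j
  have hv := u_mem hr0 hr1 k
  have key := core_ineq hc.le hu.1 hu.2 hv.1 hv.2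
  rw [bW_eq hr0 hr1, bW_eq hr0 hr1, bW_eq hr0 hr1]
  have huv : r ^ ((j:ℝ)+1) * r ^ ((k:ℝ)+1) = r ^ ((↑(j+k+1):ℝ)+1) := by
    rw [← Real.rpow_add hr0]
    congr 1
    push_cast
    ring
  rwa [huv] at key

include hr0 hr1 hc in
lemma EW_nonneg (n : ℕ) : 0 ≤ EW r c n := by
  rw [EW, sub_nonneg]
  calc ∑ p ∈ antidiagonal n, bW r c p.1 * bW r c p.2
      ≤ ∑ _p ∈ antidiagonal n, bW r c (n+1) := by
        apply Finset.sum_le_sum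
        intro p hp
        have := bW_mul_le hr0 hr1 hc p.1 p.2
        rwa [show p.1 + p.2 + 1 = n + 1 by rw [Finset.HasAntidiagonal.mem_antidiagonal.1 hp]] at this
    _ = ((n:ℝ)+1) * bW r c (n+1) := by
        rw [Finset.sum_const, Finset.Nat.card_antidiagonal, nsmul_eq_mul]
        push_cast
        ring

include hr0 hr1 hc in
lemma EW_PB : PB (EW r c) := by
  have h1 : PB (fun n => ((n:ℝ)+1) * bW r c (n+1)) := by
    have := ((bW_PB hr0 hr1 hc).succ).mul_linear 1
    apply this.congr
    intro n
    ring
  exact h1.sub ((bW_PB hr0 hr1 hc).antidiagSum (bW_PB hr0 hr1 hc))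

include hr0 hr1 hc in
lemma identity1 {x : ℝ} (hx : 0 < x) :
    ES (b1W r c) r x - ES (bW r c) r x - ES (bW r c) r x * ES (bW r c) r x
      = ES (shiftW (EW r c)) r x := by
  have hb := bW_PB hr0 hr1 hc
  have hb1 := b1W_PB hr0 hr1 hc
  have hsh : PB (fun n => ((n:ℝ)+1) * bW r c (n+1)) := by
    have := (hb.succ).mul_linear 1
    apply this.congr
    intro n
    ring
  rw [ES_sub hr0 hr1 hb1 hb hx, ES_mul hr0 hr1 hb hb hx]
  have h1 : (fun n => b1W r c n - bW r c n)
      = shiftW (fun n => ((n:ℝ)+1) * bW r c (n+1)) := by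
    funext n
    cases n with
    | zero => simp [b1W, shiftW]
    | succ m => simp [b1W, shiftW]; push_cast; ring
  rw [h1, ← ES_shifted hr0 hr1 (hb.antidiagSum hb) hx,
    ES_sub hr0 hr1 hsh.shift (hb.antidiagSum hb).shift hx]
  congr 1
  funext n
  cases n with
  | zero => simp [shiftW, EW]
  | succ m => simp [shiftW, EW]

lemma symm_sum (f : ℕ → ℝ) (n : ℕ) :
    2 * ∑ p ∈ antidiagonal n, f p.1 * (((p.2:ℝ)+1) * f p.2)
      = ((n:ℝ)+2) * ∑ p ∈ antidiagonal n, f p.1 * f p.2 := by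
  have hswap : ∑ p ∈ antidiagonal n, f p.1 * (((p.2:ℝ)+1) * f p.2)
      = ∑ p ∈ antidiagonal n, f p.2 * (((p.1:ℝ)+1) * f p.1) := by
    rw [← Finset.HasAntidiagonal.map_swap_antidiagonal, Finset.sum_map]
    simp
  have expand : ∀ p ∈ antidiagonal n,
      f p.1 * (((p.2:ℝ)+1) * f p.2) + f p.2 * (((p.1:ℝ)+1) * f p.1)
        = ((n:ℝ)+2) * (f p.1 * f p.2) := by
    intro p hp
    have hpn : p.1 + p.2 = n := Finset.HasAntidiagonal.mem_antidiagonal.1 hp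
    have : ((p.1:ℝ)) + ((p.2:ℝ)) = (n:ℝ) := by exact_mod_cast congrArg (Nat.cast : ℕ → ℝ) hpn
    linear_combination f p.1 * f p.2 * this
  calc 2 * ∑ p ∈ antidiagonal n, f p.1 * (((p.2:ℝ)+1) * f p.2)
      = ∑ p ∈ antidiagonal n, (f p.1 * (((p.2:ℝ)+1) * f p.2)
          + f p.2 * (((p.1:ℝ)+1) * f p.1)) := by
        rw [Finset.sum_add_distrib, ← hswap]; ring
    _ = ∑ p ∈ antidiagonal n, ((n:ℝ)+2) * (f p.1 * f p.2) := Finset.sum_congr rfl expand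
    _ = ((n:ℝ)+2) * ∑ p ∈ antidiagonal n, f p.1 * f p.2 := by rw [Finset.mul_sum]

include hr0 hr1 hc in
lemma identity2 {x : ℝ} (hx : 0 < x) :
    ES (b2W r c) r x - ES (b1W r c) r x
        - 2 * (ES (bW r c) r x * ES (b1W r c) r x)
      = ES (shiftW (fun n => ((n:ℝ)+2) * EW r c n)) r x := by
  have hb := bW_PB hr0 hr1 hc
  have hb1 := b1W_PB hr0 hr1 hc
  have hb2 := b2W_PB hr0 hr1 hc
  have hsh2 : PB (fun n => (((n:ℝ)+2) * ((n:ℝ)+1)) * bW r c (n+1)) := by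
    have hA := ((hb.succ).mul_linear 1).mul_linear 1
    have hB := (hb.succ).mul_linear 1
    apply (hA.add hB).congr
    intro n
    ring
  rw [ES_sub hr0 hr1 hb2 hb1 hx, ES_mul hr0 hr1 hb hb1 hx]
  have h1 : (fun n => b2W r c n - b1W r c n)
      = shiftW (fun n => (((n:ℝ)+2) * ((n:ℝ)+1)) * bW r c (n+1)) := by
    funext n
    cases n with
    | zero => simp [b2W, b1W, shiftW]
    | succ m => simp [b2W, b1W, shiftW]; push_cast; ring
  rw [h1, ← ES_shifted hr0 hr1 (hb.antidiagSum hb1) hx]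
  rw [show (2:ℝ) * ES (shiftW fun n => ∑ p ∈ antidiagonal n, bW r c p.1 * b1W r c p.2) r x
      = ES (fun m => 2 * shiftW (fun n => ∑ p ∈ antidiagonal n, bW r c p.1 * b1W r c p.2) m) r x
    from ES_const_mul 2]
  have h2PB : PB (fun m => 2 * shiftW (fun n => ∑ p ∈ antidiagonal n, bW r c p.1 * b1W r c p.2) m) := by
    have := ((hb.antidiagSum hb1).shift).const_mul 2
    exact this
  rw [ES_sub hr0 hr1 hsh2.shift h2PB hx]
  congr 1
  funext n
  cases n with
  | zero => simp [shiftW]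
  | succ m =>
    simp only [shiftW_succ, EW]
    have := symm_sum (bW r c) m
    simp only [b1W] at *
    nlinarith [this]
end BW

noncomputable def d1 (r : ℝ) (w : ℕ → ℝ) : ℕ → ℝ := fun n => (((n:ℝ)+1) * Real.log r) * w n

section WStep
variable {r c : ℝ}

lemma PB.d1 {w : ℕ → ℝ} (hw : PB w) (r : ℝ) : PB (d1 r w) := hw.mul_linear (Real.log r)

lemma ES_neg {w : ℕ → ℝ} {x : ℝ} : - ES w r x = ES (fun n => -(w n)) r x := by
  have h := ES_const_mul (w := w) (r := r) (x := x) (-1)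
  calc - ES w r x = (-1) * ES w r x := by ring
    _ = ES (fun n => (-1) * w n) r x := h
    _ = ES (fun n => -(w n)) r x := by
        congr 1
        funext n
        ring

lemma one_sub_rpow_pos (hr0 : 0 < r) (hr1 : r < 1) (n : ℕ) : 0 < 1 - r ^ ((n:ℝ)+1) := by
  have := (u_mem hr0 hr1 n).2
  linarith

lemma wstep (hr0 : 0 < r) (hr1 : r < 1) (hc0 : 0 < c) (E : ℝ) (n : ℕ) :
    (E * (1 - r ^ ((n:ℝ)+1))⁻¹) * ((r ^ (((n:ℝ)+1)*c) - 1)/c) = -(E * bW r c n) := by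
  have hden : 1 - r ^ ((n:ℝ)+1) ≠ 0 := ne_of_gt (one_sub_rpow_pos hr0 hr1 n)
  rw [bW]
  field_simp
  ring

lemma invW_PB (hr0 : 0 < r) (hr1 : r < 1) : PB (fun n => (1 - r ^ ((n:ℝ)+1))⁻¹) := by
  apply PB.of_bound ((1-r)⁻¹)
  intro n
  have h1 : r ^ ((n:ℝ)+1) ≤ r := by
    calc r ^ ((n:ℝ)+1) ≤ r ^ (1:ℝ) :=
          Real.rpow_le_rpow_of_exponent_ge hr0 hr1.le (by
            have : (0:ℝ) ≤ (n:ℝ) := Nat.cast_nonneg n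
            linarith)
      _ = r := Real.rpow_one r
  have h2 : 0 < 1 - r ^ ((n:ℝ)+1) := one_sub_rpow_pos hr0 hr1 n
  have h3 : 0 < 1 - r := by linarith
  rw [abs_of_pos (by positivity)]
  apply inv_anti₀ h3
  linarith

end WStep

section Qlt
variable {q c : ℝ}

noncomputable def w0lt (q : ℝ) : ℕ → ℝ := fun n => Real.log q * (1 - q ^ ((n:ℝ)+1))⁻¹

lemma w0lt_PB (hq0 : 0 < q) (hq1 : q < 1) : PB (w0lt q) :=
  (invW_PB hq0 hq1).const_mul (Real.log q)

lemma qlt_dig (hq1 : q < 1) (x : ℝ) :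
    qDigamma q x = -Real.log (1-q) + ES (w0lt q) q x := by
  rw [qDigamma, if_pos hq1, ES, ← tsum_mul_left]
  congr 1
  apply tsum_congr
  intro n
  rw [w0lt, div_eq_mul_inv]
  ring

lemma qlt_hasDeriv (hq0 : 0 < q) (hq1 : q < 1) {x : ℝ} (hx : 0 < x) :
    HasDerivAt (qDigamma q) (ES (d1 q (w0lt q)) q x) x := by
  have hfun : qDigamma q = fun y => -Real.log (1-q) + ES (w0lt q) q y :=
    funext (qlt_dig hq1)
  rw [hfun]
  exact (hasDerivAt_ES hq0 hq1 (w0lt_PB hq0 hq1) hx).const_add (-Real.log (1-q))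

lemma qlt_p1 (hq0 : 0 < q) (hq1 : q < 1) {x : ℝ} (hx : 0 < x) :
    qPolygamma q 1 x = ES (d1 q (w0lt q)) q x := by
  rw [qPolygamma, iteratedDeriv_one]
  exact (qlt_hasDeriv hq0 hq1 hx).deriv

lemma qlt_p2 (hq0 : 0 < q) (hq1 : q < 1) {x : ℝ} (hx : 0 < x) :
    qPolygamma q 2 x = ES (d1 q (d1 q (w0lt q))) q x := by
  rw [qPolygamma, iteratedDeriv_succ]
  have hEq : iteratedDeriv 1 (qDigamma q) =ᶠ[nhds x] (fun y => ES (d1 q (w0lt q)) q y) := by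
    filter_upwards [isOpen_Ioi.mem_nhds (mem_Ioi.2 hx)] with y hy
    exact qlt_p1 hq0 hq1 (mem_Ioi.1 hy)
  rw [hEq.deriv_eq]
  exact (hasDerivAt_ES hq0 hq1 ((w0lt_PB hq0 hq1).d1 q) hx).deriv

lemma qlt_fd0 (hq0 : 0 < q) (hq1 : q < 1) (hc0 : 0 < c) {x : ℝ} (hx : 0 < x) :
    fdiff (qDigamma q) c x = (-Real.log q) * ES (bW q c) q x := by
  rw [fdiff, qlt_dig hq1 (x+c), qlt_dig hq1 x,
    show -Real.log (1-q) + ES (w0lt q) q (x+c) - (-Real.log (1-q) + ES (w0lt q) q x)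
      = ES (w0lt q) q (x+c) - ES (w0lt q) q x by ring]
  rw [ES_fdiff hq0 hq1 (w0lt_PB hq0 hq1) hx hc0, ES_const_mul]
  congr 1
  funext n
  rw [w0lt, wstep hq0 hq1 hc0]
  ring

lemma qlt_fd1 (hq0 : 0 < q) (hq1 : q < 1) (hc0 : 0 < c) {x : ℝ} (hx : 0 < x) :
    fdiff (qPolygamma q 1) c x
      = (-(Real.log q * Real.log q)) * ES (b1W q c) q x := by
  rw [fdiff, qlt_p1 hq0 hq1 (by linarith : (0:ℝ) < x + c), qlt_p1 hq0 hq1 hx,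
    ES_fdiff hq0 hq1 ((w0lt_PB hq0 hq1).d1 q) hx hc0, ES_const_mul]
  congr 1
  funext n
  rw [show d1 q (w0lt q) n * ((q ^ (((n:ℝ)+1)*c) - 1)/c)
      = ((((n:ℝ)+1) * Real.log q * Real.log q) * (1 - q ^ ((n:ℝ)+1))⁻¹)
          * ((q ^ (((n:ℝ)+1)*c) - 1)/c) by rw [d1, w0lt]; ring]
  rw [wstep hq0 hq1 hc0, b1W]
  ring

lemma qlt_fd2 (hq0 : 0 < q) (hq1 : q < 1) (hc0 : 0 < c) {x : ℝ} (hx : 0 < x) :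
    fdiff (qPolygamma q 2) c x
      = ((-Real.log q)*(-Real.log q)*(-Real.log q)) * ES (b2W q c) q x := by
  rw [fdiff, qlt_p2 hq0 hq1 (by linarith : (0:ℝ) < x + c), qlt_p2 hq0 hq1 hx,
    ES_fdiff hq0 hq1 (((w0lt_PB hq0 hq1).d1 q).d1 q) hx hc0,
    ES_const_mul]
  congr 1
  funext n
  rw [show d1 q (d1 q (w0lt q)) n * ((q ^ (((n:ℝ)+1)*c) - 1)/c)
      = ((((n:ℝ)+1) * (((n:ℝ)+1) * Real.log q * Real.log q * Real.log q))
          * (1 - q ^ ((n:ℝ)+1))⁻¹) * ((q ^ (((n:ℝ)+1)*c) - 1)/c) by rw [d1, d1, w0lt]; ring]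
  rw [wstep hq0 hq1 hc0, b2W]
  ring

end Qlt

section Qgt
variable {q c : ℝ}

noncomputable def w0gt (q : ℝ) : ℕ → ℝ := fun n => Real.log q * (1 - (q⁻¹) ^ ((n:ℝ)+1))⁻¹

lemma rpow_inv_eq (hq0 : 0 < q) (y : ℝ) : q ^ (-y) = (q⁻¹) ^ y := by
  rw [Real.rpow_neg hq0.le, Real.inv_rpow hq0.le]

lemma qgt_r0 (hq : 1 < q) : 0 < q⁻¹ := by positivity
lemma qgt_r1 (hq : 1 < q) : q⁻¹ < 1 := by
  rw [inv_lt_one_iff₀]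
  right
  exact hq

lemma qgt_dig (hq : 1 < q) (x : ℝ) :
    qDigamma q x = (-Real.log (q-1) - Real.log q / 2) + Real.log q * x
      - ES (w0gt q) (q⁻¹) x := by
  have hq0 : 0 < q := lt_trans one_pos hq
  rw [qDigamma, if_neg (not_lt.2 hq.le)]
  have hterm : ∀ n : ℕ, q ^ (-((n:ℝ)+1) * x) / (1 - q ^ (-((n:ℝ)+1)))
      = (1 - (q⁻¹) ^ ((n:ℝ)+1))⁻¹ * (q⁻¹) ^ (((n:ℝ)+1) * x) := by
    intro n
    rw [show -((n:ℝ)+1) * x = -(((n:ℝ)+1) * x) by ring, rpow_inv_eq hq0,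
      show -((n:ℝ)+1) = -(((n:ℝ)+1)) by ring, rpow_inv_eq hq0, div_eq_mul_inv]
    ring
  rw [show (∑' n : ℕ, q ^ (-((n:ℝ)+1) * x) / (1 - q ^ (-((n:ℝ)+1))))
      = ∑' n : ℕ, (1 - (q⁻¹) ^ ((n:ℝ)+1))⁻¹ * (q⁻¹) ^ (((n:ℝ)+1) * x) from tsum_congr hterm]
  have hS : Real.log q * (∑' n : ℕ, (1 - (q⁻¹) ^ ((n:ℝ)+1))⁻¹ * (q⁻¹) ^ (((n:ℝ)+1) * x))
      = ES (w0gt q) (q⁻¹) x := by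
    rw [ES, ← tsum_mul_left]
    exact tsum_congr (fun n => by rw [w0gt]; ring)
  rw [← hS]
  ring

lemma w0gt_PB (hq : 1 < q) : PB (w0gt q) :=
  (invW_PB (qgt_r0 hq) (qgt_r1 hq)).const_mul (Real.log q)

lemma qgt_hasDeriv (hq : 1 < q) {x : ℝ} (hx : 0 < x) :
    HasDerivAt (qDigamma q) (Real.log q - ES (d1 (q⁻¹) (w0gt q)) (q⁻¹) x) x := by
  have hfun : qDigamma q = fun y => ((-Real.log (q-1) - Real.log q / 2) + Real.log q * y)
      - ES (w0gt q) (q⁻¹) y := by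
    funext y
    rw [qgt_dig hq y]
  rw [hfun]
  have h1 : HasDerivAt (fun y : ℝ => (-Real.log (q-1) - Real.log q / 2) + Real.log q * y)
      (Real.log q) x := by
    simpa using ((hasDerivAt_id x).const_mul (Real.log q)).const_add
      (-Real.log (q-1) - Real.log q / 2)
  exact h1.sub (hasDerivAt_ES (qgt_r0 hq) (qgt_r1 hq) (w0gt_PB hq) hx)

lemma qgt_p1 (hq : 1 < q) {x : ℝ} (hx : 0 < x) :
    qPolygamma q 1 x = Real.log q - ES (d1 (q⁻¹) (w0gt q)) (q⁻¹) x := by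
  rw [qPolygamma, iteratedDeriv_one]
  exact (qgt_hasDeriv hq hx).deriv

lemma qgt_p2 (hq : 1 < q) {x : ℝ} (hx : 0 < x) :
    qPolygamma q 2 x = - ES (d1 (q⁻¹) (d1 (q⁻¹) (w0gt q))) (q⁻¹) x := by
  rw [qPolygamma, iteratedDeriv_succ]
  have hEq : iteratedDeriv 1 (qDigamma q) =ᶠ[nhds x]
      (fun y => Real.log q - ES (d1 (q⁻¹) (w0gt q)) (q⁻¹) y) := by
    filter_upwards [isOpen_Ioi.mem_nhds (mem_Ioi.2 hx)] with y hy
    exact qgt_p1 hq (mem_Ioi.1 hy)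
  rw [hEq.deriv_eq]
  have h2 := ((hasDerivAt_ES (qgt_r0 hq) (qgt_r1 hq)
    ((w0gt_PB hq).d1 (q⁻¹)) hx).const_sub (Real.log q)).deriv
  rw [h2]
  exact neg_inj.2 rfl

lemma qgt_fd0 (hq : 1 < q) (hc0 : 0 < c) {x : ℝ} (hx : 0 < x) :
    fdiff (qDigamma q) c x
      = Real.log q + Real.log q * ES (bW (q⁻¹) c) (q⁻¹) x := by
  rw [fdiff, qgt_dig hq (x+c), qgt_dig hq x]
  rw [show ((-Real.log (q-1) - Real.log q / 2) + Real.log q * (x+c) - ES (w0gt q) (q⁻¹) (x+c)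
      - (((-Real.log (q-1) - Real.log q / 2) + Real.log q * x) - ES (w0gt q) (q⁻¹) x))
      = Real.log q * c - (ES (w0gt q) (q⁻¹) (x+c) - ES (w0gt q) (q⁻¹) x) by ring]
  rw [sub_div, mul_div_assoc, div_self (ne_of_gt hc0), mul_one,
    ES_fdiff (qgt_r0 hq) (qgt_r1 hq) (w0gt_PB hq) hx hc0, sub_eq_add_neg,
    ES_neg, ES_const_mul]
  congr 1
  congr 1
  funext n
  rw [show w0gt q n * (((q⁻¹) ^ (((n:ℝ)+1)*c) - 1)/c)
      = (Real.log q * (1 - (q⁻¹) ^ ((n:ℝ)+1))⁻¹) * (((q⁻¹) ^ (((n:ℝ)+1)*c) - 1)/c)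
    by rw [w0gt]]
  rw [wstep (qgt_r0 hq) (qgt_r1 hq) hc0]
  ring

lemma qgt_fd1 (hq : 1 < q) (hc0 : 0 < c) {x : ℝ} (hx : 0 < x) :
    fdiff (qPolygamma q 1) c x
      = (-(Real.log q * Real.log q)) * ES (b1W (q⁻¹) c) (q⁻¹) x := by
  rw [fdiff, qgt_p1 hq (by linarith : (0:ℝ) < x + c), qgt_p1 hq hx,
    show Real.log q - ES (d1 (q⁻¹) (w0gt q)) (q⁻¹) (x+c)
        - (Real.log q - ES (d1 (q⁻¹) (w0gt q)) (q⁻¹) x)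
      = -(ES (d1 (q⁻¹) (w0gt q)) (q⁻¹) (x+c) - ES (d1 (q⁻¹) (w0gt q)) (q⁻¹) x) by ring,
    neg_div, ES_fdiff (qgt_r0 hq) (qgt_r1 hq) ((w0gt_PB hq).d1 (q⁻¹)) hx hc0,
    ES_neg, ES_const_mul]
  congr 1
  funext n
  rw [show d1 (q⁻¹) (w0gt q) n * (((q⁻¹) ^ (((n:ℝ)+1)*c) - 1)/c)
      = ((((n:ℝ)+1) * Real.log (q⁻¹) * Real.log q) * (1 - (q⁻¹) ^ ((n:ℝ)+1))⁻¹)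
          * (((q⁻¹) ^ (((n:ℝ)+1)*c) - 1)/c) by rw [d1, w0gt]; ring]
  rw [wstep (qgt_r0 hq) (qgt_r1 hq) hc0, Real.log_inv, b1W]
  ring

lemma qgt_fd2 (hq : 1 < q) (hc0 : 0 < c) {x : ℝ} (hx : 0 < x) :
    fdiff (qPolygamma q 2) c x
      = (Real.log q * Real.log q * Real.log q) * ES (b2W (q⁻¹) c) (q⁻¹) x := by
  rw [fdiff, qgt_p2 hq (by linarith : (0:ℝ) < x + c), qgt_p2 hq hx,
    show -ES (d1 (q⁻¹) (d1 (q⁻¹) (w0gt q))) (q⁻¹) (x+c)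
        - -ES (d1 (q⁻¹) (d1 (q⁻¹) (w0gt q))) (q⁻¹) x
      = -(ES (d1 (q⁻¹) (d1 (q⁻¹) (w0gt q))) (q⁻¹) (x+c)
          - ES (d1 (q⁻¹) (d1 (q⁻¹) (w0gt q))) (q⁻¹) x) by ring,
    neg_div, ES_fdiff (qgt_r0 hq) (qgt_r1 hq)
      (((w0gt_PB hq).d1 (q⁻¹)).d1 (q⁻¹)) hx hc0,
    ES_neg, ES_const_mul]
  congr 1
  funext n
  rw [show d1 (q⁻¹) (d1 (q⁻¹) (w0gt q)) n * (((q⁻¹) ^ (((n:ℝ)+1)*c) - 1)/c)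
      = ((((n:ℝ)+1) * (((n:ℝ)+1) * Real.log (q⁻¹) * Real.log (q⁻¹) * Real.log q))
          * (1 - (q⁻¹) ^ ((n:ℝ)+1))⁻¹)
          * (((q⁻¹) ^ (((n:ℝ)+1)*c) - 1)/c) by rw [d1, d1, w0gt]; ring]
  rw [wstep (qgt_r0 hq) (qgt_r1 hq) hc0, Real.log_inv, b2W]
  ring

end Qgt

lemma CM_congr {f g : ℝ → ℝ} (h : Set.EqOn f g (Set.Ioi 0))
    (hg : CompletelyMonotoneOn g (Set.Ioi 0)) :
    CompletelyMonotoneOn f (Set.Ioi 0) := by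
  constructor
  · exact hg.1.congr h
  · intro k x hx
    rw [iteratedDerivWithin_congr h hx]
    exact hg.2 k x hx

lemma CM_main1 {r cc : ℝ} (hr0 : 0 < r) (hr1 : r < 1) (hc : 1 < cc) {K : ℝ} (hK : 0 ≤ K)
    {f : ℝ → ℝ}
    (hf : ∀ x ∈ Set.Ioi (0:ℝ), f x
      = K * (ES (b1W r cc) r x - ES (bW r cc) r x - ES (bW r cc) r x * ES (bW r cc) r x)) :
    CompletelyMonotoneOn f (Set.Ioi 0) := by
  apply CM_congr (g := ES (fun n => K * shiftW (EW r cc) n) r)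
  · intro x hx
    rw [hf x hx, identity1 hr0 hr1 hc (mem_Ioi.1 hx), ES_const_mul]
  · apply completelyMonotoneOn_ES hr0 hr1
    · exact ((EW_PB hr0 hr1 hc).shift).const_mul K
    · intro n
      apply mul_nonneg hK
      cases n with
      | zero => simp
      | succ m =>
        rw [shiftW_succ]
        exact EW_nonneg hr0 hr1 hc m

lemma CM_main2 {r cc : ℝ} (hr0 : 0 < r) (hr1 : r < 1) (hc : 1 < cc) {K : ℝ} (hK : 0 ≤ K)
    {f : ℝ → ℝ}
    (hf : ∀ x ∈ Set.Ioi (0:ℝ), f x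
      = K * (ES (b2W r cc) r x - ES (b1W r cc) r x
          - 2 * (ES (bW r cc) r x * ES (b1W r cc) r x))) :
    CompletelyMonotoneOn f (Set.Ioi 0) := by
  apply CM_congr (g := ES (fun n => K * shiftW (fun m => ((m:ℝ)+2) * EW r cc m) n) r)
  · intro x hx
    rw [hf x hx, identity2 hr0 hr1 hc (mem_Ioi.1 hx), ES_const_mul]
  · apply completelyMonotoneOn_ES hr0 hr1
    · have hEW := EW_PB hr0 hr1 hc
      have h2 : PB (fun m => ((m:ℝ)+2) * EW r cc m) := by
        apply ((hEW.mul_linear 1).add hEW).congr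
        intro n
        ring
      exact (h2.shift).const_mul K
    · intro n
      apply mul_nonneg hK
      cases n with
      | zero => simp
      | succ m =>
        rw [shiftW_succ]
        have h1 := EW_nonneg hr0 hr1 hc m
        have h2 : (0:ℝ) ≤ (m:ℝ)+2 := by positivity
        exact mul_nonneg h2 h1

end QDG

/-- Theorem 1 (second part): for `q > 0`, `q ≠ 1`, `c > 1` and `m = 1, 2`,
`x ↦ -G_m(x;q,c)` is completely monotonic on `(0,∞)`. -/
theorem neg_Gfun_completelyMonotone (q c : ℝ) (hq : 0 < q) (hq1 : q ≠ 1)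
    (hc : 1 < c) (m : ℕ) (hm : m = 1 ∨ m = 2) :
    CompletelyMonotoneOn (fun x => -Gfun m q c x) (Set.Ioi 0) := by
  have hc0 : (0:ℝ) < c := lt_trans one_pos hc
  have poly0 : qPolygamma q 0 = qDigamma q := by
    rw [qPolygamma, iteratedDeriv_zero]
  have hdmq1 : dmq 1 q = 1 := by
    rw [dmq, if_neg]
    rintro ⟨-, h⟩
    omega
  have hdmq2 : dmq 2 q = 1 := by
    rw [dmq]
    split_ifs with h
    · norm_num
    · rfl
  rcases lt_or_gt_of_ne hq1 with hql | hqg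
  · -- case 0 < q < 1
    have hlog : Real.log q < 0 := Real.log_neg hq hql
    rcases hm with rfl | rfl
    · apply QDG.CM_main1 hq hql hc (K := Real.log q * Real.log q) (mul_self_nonneg _)
      intro x hx
      have hx0 : (0:ℝ) < x := hx
      have h0 := QDG.qlt_fd0 hq hql hc0 hx0
      have h1 := QDG.qlt_fd1 hq hql hc0 hx0
      simp only [Gfun, poly0, hdmq1]
      rw [h0, h1]
      push_cast
      ring
    · have hl : (0:ℝ) ≤ -Real.log q := by linarith
      apply QDG.CM_main2 hq hql hc
        (K := (-Real.log q) * (-Real.log q) * (-Real.log q))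
        (mul_nonneg (mul_nonneg hl hl) hl)
      intro x hx
      have hx0 : (0:ℝ) < x := hx
      have h0 := QDG.qlt_fd0 hq hql hc0 hx0
      have h1 := QDG.qlt_fd1 hq hql hc0 hx0
      have h2 := QDG.qlt_fd2 hq hql hc0 hx0
      simp only [Gfun, poly0, hdmq2]
      rw [h0, h1, h2]
      push_cast
      ring
  · -- case q > 1
    have hlog : 0 < Real.log q := Real.log_pos hqg
    have hr0 := QDG.qgt_r0 hqg
    have hr1 := QDG.qgt_r1 hqg
    rcases hm with rfl | rfl
    · apply QDG.CM_main1 hr0 hr1 hc (K := Real.log q * Real.log q) (mul_self_nonneg _)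
      intro x hx
      have hx0 : (0:ℝ) < x := hx
      have h0 := QDG.qgt_fd0 hqg hc0 hx0
      have h1 := QDG.qgt_fd1 hqg hc0 hx0
      simp only [Gfun, poly0, hdmq1]
      rw [h0, h1]
      push_cast
      ring
    · apply QDG.CM_main2 hr0 hr1 hc
        (K := Real.log q * Real.log q * Real.log q)
        (mul_nonneg (mul_nonneg hlog.le hlog.le) hlog.le)
      intro x hx
      have hx0 : (0:ℝ) < x := hx
      have h0 := QDG.qgt_fd0 hqg hc0 hx0
      have h1 := QDG.qgt_fd1 hqg hc0 hx0
      have h2 := QDG.qgt_fd2 hqg hc0 hx0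
      simp only [Gfun, poly0, hdmq2]
      rw [h0, h1, h2]
      push_cast
      ring
end

section
/- Let r ≥ m ≥ n ≥ 1 be integers satisfying r + 1 = m + n. Then for every integer k ≥ 1, ∑_{j=1}^{k} j^{m-1}(k-j)^{n-1} ≥ ((m-1)!(n-1)!/(r-1)!) · ∑_{j=1}^{k} (k-j)^{r-1}, where the convention 0^0 = 1 is used. -/
/-!
Write `p = m - 1`, `q = n - 1`, so that `r - 1 = p + q` and the constant is `1 / C(p + q, p)`.
With `A(k) = ∑_{j=1}^k j^p (k-j)^q` the claim becomes `∑_{i<k} i^(p+q) ≤ C(p+q, p) A(k)`,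
which follows by summing `N^(p+q) ≤ C(p+q, p) (A(N+1) - A(N))` over `N < k`. This increment
bound is a double count: every `x : Fin (p+q) → Fin N` takes its `p` smallest values on some
`p`-set `S`, and for fixed `S` and fixed minimum `a` of `x` off `S` there are
`(a+1)^p ((N-a)^q - (N-1-a)^q)` such `x`; summed over `a`, this is `A(N+1) - A(N)`.
-/

open Finset

theorem sum_Icc_one_eq_sum_range {M : Type*} [AddCommMonoid M] (f : ℕ → M) (k : ℕ) :
    ∑ j ∈ Icc 1 k, f j = ∑ a ∈ range k, f (a + 1) := by
  rw [range_eq_Ico, sum_Ico_add' f, ← Ico_add_one_right_eq_Icc, zero_add]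

theorem sum_Icc_one_tsub_eq_sum_range {M : Type*} [AddCommMonoid M] (f : ℕ → M) (k : ℕ) :
    ∑ j ∈ Icc 1 k, f (k - j) = ∑ i ∈ range k, f i := by
  rw [sum_Icc_one_eq_sum_range, ← sum_range_reflect]
  exact sum_congr rfl fun i hi => by rw [show k - (k - 1 - i + 1) = i by grind]

theorem Finset.exists_card_eq_forall_mem_forall_notMem_le {ι α : Type*} [Fintype ι]
    [LinearOrder α] (x : ι → α) {p : ℕ} (hp : p ≤ Fintype.card ι) :
    ∃ S : Finset ι, #S = p ∧ ∀ i ∈ S, ∀ j ∉ S, x i ≤ x j := by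
  classical
  induction p with
  | zero => exact ⟨∅, rfl, by simp⟩
  | succ p ih =>
    obtain ⟨S, hcard, hS⟩ := ih (by omega)
    have hne : Sᶜ.Nonempty := by
      rw [← card_pos, card_compl, hcard]
      omega
    obtain ⟨j₀, hj₀, hmin⟩ := exists_min_image Sᶜ x hne
    rw [mem_compl] at hj₀
    refine ⟨insert j₀ S, by rw [card_insert_of_notMem hj₀, hcard], fun i hi j hj => ?_⟩
    rw [mem_insert, not_or] at hj
    rcases mem_insert.mp hi with rfl | hi
    · exact hmin j (mem_compl.mpr hj.2)
    · exact hS i hi j hj.2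

section Counting

variable {ι β : Type*} [Fintype ι] [DecidableEq ι] {N : ℕ}

theorem Fintype.card_piFinset_ite (S : Finset ι) (s t : Finset β) :
    #(Fintype.piFinset fun i => if i ∈ S then s else t) = #s ^ #S * #t ^ #Sᶜ := by
  rw [Fintype.card_piFinset, prod_apply_ite, prod_const, prod_const, filter_mem_eq_inter,
    univ_inter, filter_notMem_eq_sdiff, ← compl_eq_univ_sdiff]

def lowOn (N : ℕ) (S : Finset ι) : Finset (ι → Fin N) :=
  {x | ∀ i ∈ S, ∀ j ∉ S, x i ≤ x j}

theorem lowOn_subset_biUnion (S : Finset ι) (hS : Sᶜ.Nonempty) :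
    lowOn N S ⊆ univ.biUnion fun a : Fin N =>
      (Fintype.piFinset fun i => if i ∈ S then Iic a else Ici a) \
        Fintype.piFinset fun i => if i ∈ S then Iic a else Ioi a := by
  intro x hx
  simp only [lowOn, mem_filter, mem_univ, true_and] at hx
  obtain ⟨j₀, hj₀, hmin⟩ := exists_min_image Sᶜ x hS
  rw [mem_compl] at hj₀
  simp only [mem_biUnion, mem_univ, true_and, mem_sdiff, Fintype.mem_piFinset]
  refine ⟨x j₀, fun i => ?_, fun h => ?_⟩
  · split_ifs with hi
    · exact mem_Iic.mpr (hx i hi j₀ hj₀)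
    · exact mem_Ici.mpr (hmin i (mem_compl.mpr hi))
  · simpa [hj₀] using h j₀

theorem card_lowOn_le (S : Finset ι) (hS : Sᶜ.Nonempty) :
    #(lowOn N S) ≤
      ∑ a : Fin N, ((a + 1) ^ #S * (N - a) ^ #Sᶜ - (a + 1) ^ #S * (N - 1 - a) ^ #Sᶜ) := by
  refine (card_le_card (lowOn_subset_biUnion S hS)).trans <| card_biUnion_le.trans ?_
  refine (sum_congr rfl fun a _ => ?_).le
  have hsub : (Fintype.piFinset fun i => if i ∈ S then Iic a else Ioi a) ⊆
      Fintype.piFinset fun i => if i ∈ S then Iic a else Ici a :=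
    Fintype.piFinset_subset _ _ fun i => by split_ifs; exacts [subset_rfl, Ioi_subset_Ici_self]
  rw [card_sdiff_of_subset hsub, Fintype.card_piFinset_ite, Fintype.card_piFinset_ite,
    Fin.card_Iic, Fin.card_Ici, Fin.card_Ioi]

end Counting

theorem pow_add_le_choose_mul_sum (N p q : ℕ) (hq : q ≠ 0) :
    N ^ (p + q) ≤ (p + q).choose p *
      ∑ a ∈ range N, ((a + 1) ^ p * (N - a) ^ q - (a + 1) ^ p * (N - 1 - a) ^ q) := by
  calc N ^ (p + q) = #(univ : Finset (Fin (p + q) → Fin N)) := by simp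
    _ ≤ #((powersetCard p univ).biUnion (lowOn N)) := card_le_card fun x _ => by
      obtain ⟨S, hS, hx⟩ := exists_card_eq_forall_mem_forall_notMem_le x (p := p) (by simp)
      exact mem_biUnion.mpr ⟨S, mem_powersetCard_univ.mpr hS, by simpa [lowOn] using hx⟩
    _ ≤ ∑ S ∈ powersetCard p univ, #(lowOn N S) := card_biUnion_le
    _ ≤ ∑ S ∈ powersetCard p univ,
          ∑ a : Fin N, ((a + 1) ^ p * (N - a) ^ q - (a + 1) ^ p * (N - 1 - a) ^ q) := by
      refine sum_le_sum fun S hS => ?_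
      have hSp : #S = p := mem_powersetCard_univ.mp hS
      have hSq : #Sᶜ = q := by rw [card_compl, hSp, Fintype.card_fin]; omega
      have := card_lowOn_le (N := N) S (by rw [← card_pos, hSq]; omega)
      rwa [hSp, hSq] at this
    _ = _ := by
      rw [sum_const, card_powersetCard, card_univ, Fintype.card_fin, smul_eq_mul,
        Fin.sum_univ_eq_sum_range
          fun a => (a + 1) ^ p * (N - a) ^ q - (a + 1) ^ p * (N - 1 - a) ^ q]

theorem sum_Icc_pow_mul_pow_succ (p q N : ℕ) (hq : q ≠ 0) :
    ∑ j ∈ Icc 1 (N + 1), j ^ p * (N + 1 - j) ^ q =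
      ∑ j ∈ Icc 1 N, j ^ p * (N - j) ^ q +
        ∑ a ∈ range N, ((a + 1) ^ p * (N - a) ^ q - (a + 1) ^ p * (N - 1 - a) ^ q) := by
  simp only [sum_Icc_one_eq_sum_range]
  rw [sum_range_succ, Nat.sub_self, zero_pow hq, mul_zero, add_zero, ← sum_add_distrib]
  refine sum_congr rfl fun a ha => ?_
  have ha : a < N := mem_range.mp ha
  rw [show N + 1 - (a + 1) = N - a by omega, show N - (a + 1) = N - 1 - a by omega,
    add_tsub_cancel_of_le (Nat.mul_le_mul_left _ (Nat.pow_le_pow_left (by omega) q))]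

theorem sum_range_pow_add_le_choose_mul_sum_Icc (p q k : ℕ) :
    ∑ i ∈ range k, i ^ (p + q) ≤
      (p + q).choose p * ∑ j ∈ Icc 1 k, j ^ p * (k - j) ^ q := by
  rcases eq_or_ne q 0 with rfl | hq
  · simp only [add_zero, Nat.choose_self, one_mul, pow_zero, mul_one, sum_Icc_one_eq_sum_range]
    exact sum_le_sum fun i _ => Nat.pow_le_pow_left (Nat.le_succ i) p
  induction k with
  | zero => simp
  | succ N ih =>
    rw [sum_range_succ, sum_Icc_pow_mul_pow_succ p q N hq, mul_add]
    exact add_le_add ih (pow_add_le_choose_mul_sum N p q hq)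

theorem sum_pow_ge_s_one_general (r m n : ℕ) (hn : 1 ≤ n) (hnm : n ≤ m)
    (hsum : r + 1 = m + n) (k : ℕ) :
    (((m - 1).factorial * (n - 1).factorial : ℕ) : ℝ) / ((r - 1).factorial : ℝ) *
        ∑ j ∈ Finset.Icc 1 k, ((k - j : ℕ) : ℝ) ^ (r - 1) ≤
      ∑ j ∈ Finset.Icc 1 k, (j : ℝ) ^ (m - 1) * ((k - j : ℕ) : ℝ) ^ (n - 1) := by
  obtain ⟨p, rfl⟩ : ∃ p, m = p + 1 := ⟨m - 1, by omega⟩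
  obtain ⟨q, rfl⟩ : ∃ q, n = q + 1 := ⟨n - 1, by omega⟩
  obtain rfl : r = p + q + 1 := by omega
  simp only [Nat.add_sub_cancel]
  have hfact : (p + q).choose p * (p.factorial * q.factorial) = (p + q).factorial := by
    rw [← Nat.mul_assoc, Nat.choose_symm_add, Nat.add_choose_mul_factorial_mul_factorial]
  rw [sum_Icc_one_tsub_eq_sum_range (fun i => (i : ℝ) ^ (p + q)), div_mul_eq_mul_div,
    div_le_iff₀ (by positivity), ← hfact]
  exact_mod_cast calc p.factorial * q.factorial * ∑ i ∈ range k, i ^ (p + q)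
      ≤ p.factorial * q.factorial * ((p + q).choose p * ∑ j ∈ Icc 1 k, j ^ p * (k - j) ^ q) :=
        Nat.mul_le_mul_left _ (sum_range_pow_add_le_choose_mul_sum_Icc p q k)
    _ = (∑ j ∈ Icc 1 k, j ^ p * (k - j) ^ q) *
          ((p + q).choose p * (p.factorial * q.factorial)) := by ring

/-- Lemma 1: for integers `r ≥ m ≥ n ≥ 1` with `r + 1 = m + n` and every `k ≥ 1`,
`∑_{j=1}^k j^{m-1}(k-j)^{n-1} ≥ ((m-1)!(n-1)!/(r-1)!) ∑_{j=1}^k (k-j)^{r-1}`,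
with the convention `0^0 = 1`. -/
theorem sum_pow_ge_s_one (r m n : ℕ) (hn : 1 ≤ n) (hnm : n ≤ m) (hmr : m ≤ r)
    (hsum : r + 1 = m + n) (k : ℕ) (hk : 1 ≤ k) :
    (((m - 1).factorial * (n - 1).factorial : ℕ) : ℝ) / ((r - 1).factorial : ℝ) *
        ∑ j ∈ Finset.Icc 1 k, ((k - j : ℕ) : ℝ) ^ (r - 1) ≤
      ∑ j ∈ Finset.Icc 1 k, (j : ℝ) ^ (m - 1) * ((k - j : ℕ) : ℝ) ^ (n - 1) :=
  sum_pow_ge_s_one_general r m n hn hnm hsum k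
end

section
/- Let q > 1 and 0 < c < 1. Then for every integer n ≥ 2 and every integer j with 1 ≤ j ≤ n-1, ((1-q^{-jc})(1-q^{-(n-j)c}))/((1-q^{-j})(1-q^{-(n-j)})) ≥ c(1-q^{-nc})/(1-q^{-n}). -/
/-!
Put `u = e^{-2s}`. Then `(1 - u) / (1 + u) = tanh s` and `(1 - u^c) / (1 + u^c) = tanh (c s)`, and
concavity of `tanh` on `[0, ∞)` gives `c tanh s ≤ tanh (c s)` for `0 ≤ c ≤ 1`; we derive the latter
from the convexity of `sinh` on `[0, ∞)`. The claim is a weighted sum of the two inequalities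
obtained for `u = q^{-j}` and `u = q^{-(n-j)}`.
-/

open Real Set

namespace Real

lemma convexOn_sinh_Ici : ConvexOn ℝ (Ici 0) sinh := by
  refine MonotoneOn.convexOn_of_deriv (convex_Ici 0) continuous_sinh.continuousOn
    differentiable_sinh.differentiableOn ?_
  rw [deriv_sinh]
  exact cosh_strictMonoOn.monotoneOn.mono interior_subset

lemma sinh_mul_le_mul_sinh {t x : ℝ} (ht0 : 0 ≤ t) (ht1 : t ≤ 1) (hx : 0 ≤ x) :
    sinh (t * x) ≤ t * sinh x := by
  simpa using convexOn_sinh_Ici.2 (mem_Ici.2 hx) (mem_Ici.2 le_rfl) ht0 (sub_nonneg.2 ht1)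
    (add_sub_cancel t 1)

lemma mul_tanh_le_tanh_mul {c s : ℝ} (hc0 : 0 ≤ c) (hc1 : c ≤ 1) (hs : 0 ≤ s) :
    c * tanh s ≤ tanh (c * s) := by
  -- `2 (sinh (c s) cosh s - c cosh (c s) sinh s) = (1 - c) sinh ((1 + c) s) - (1 + c) sinh ((1 - c) s)`
  have hsinh : sinh ((1 - c) * s) * (1 + c) ≤ (1 - c) * sinh ((1 + c) * s) := by
    have := sinh_mul_le_mul_sinh (t := (1 - c) / (1 + c)) (x := (1 + c) * s)
      (div_nonneg (by linarith) (by linarith)) ((div_le_one₀ (by linarith)).2 (by linarith))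
      (by positivity)
    rwa [show (1 - c) / (1 + c) * ((1 + c) * s) = (1 - c) * s by field_simp, div_mul_eq_mul_div,
      le_div_iff₀ (by linarith)] at this
  rw [show (1 + c) * s = s + c * s by ring, show (1 - c) * s = s - c * s by ring, sinh_add,
    sinh_sub] at hsinh
  rw [tanh_eq_sinh_div_cosh, tanh_eq_sinh_div_cosh, mul_div_assoc',
    div_le_div_iff₀ (cosh_pos s) (cosh_pos _)]
  linarith

lemma tanh_eq_one_sub_exp_div (x : ℝ) :
    tanh x = (1 - exp (-2 * x)) / (1 + exp (-2 * x)) := by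
  rw [tanh_eq, show -2 * x = -x + -x by ring, exp_add, exp_neg]
  have := exp_pos x
  field_simp

lemma one_sub_div_one_add_eq_tanh {u : ℝ} (hu : 0 < u) :
    (1 - u) / (1 + u) = tanh (-log u / 2) := by
  rw [tanh_eq_one_sub_exp_div, show -2 * (-log u / 2) = log u by ring, exp_log hu]

lemma mul_one_sub_div_one_add_le_rpow {c u : ℝ} (hc0 : 0 ≤ c) (hc1 : c ≤ 1) (hu0 : 0 < u)
    (hu1 : u ≤ 1) : c * ((1 - u) / (1 + u)) ≤ (1 - u ^ c) / (1 + u ^ c) := by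
  rw [one_sub_div_one_add_eq_tanh hu0, one_sub_div_one_add_eq_tanh (rpow_pos_of_pos hu0 c),
    log_rpow hu0, show -(c * log u) / 2 = c * (-log u / 2) by ring]
  exact mul_tanh_le_tanh_mul hc0 hc1 (by linarith [log_nonpos hu0.le hu1])

lemma mul_one_sub_rpow_mul_div_le {c X Y : ℝ} (hc0 : 0 ≤ c) (hc1 : c ≤ 1) (hX0 : 0 < X)
    (hX1 : X < 1) (hY0 : 0 < Y) (hY1 : Y < 1) :
    c * (1 - X ^ c * Y ^ c) / (1 - X * Y) ≤ (1 - X ^ c) * (1 - Y ^ c) / ((1 - X) * (1 - Y)) := by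
  have hX := mul_one_sub_div_one_add_le_rpow hc0 hc1 hX0 hX1.le
  have hY := mul_one_sub_div_one_add_le_rpow hc0 hc1 hY0 hY1.le
  have hXc : X ^ c ≤ 1 := rpow_le_one hX0.le hX1.le hc0
  have hYc : Y ^ c ≤ 1 := rpow_le_one hY0.le hY1.le hc0
  rw [mul_div_assoc', div_le_div_iff₀ (by positivity) (by positivity)] at hX hY
  rw [div_le_div_iff₀ (by nlinarith) (mul_pos (by linarith) (by linarith))]
  -- the difference of the two sides is the average of the defects of `hX` and `hY`,
  -- weighted by `(1 - Y ^ c) (1 - Y)` and `(1 - X ^ c) (1 - X)`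
  linarith [mul_le_mul_of_nonneg_left hX (mul_nonneg (sub_nonneg.2 hYc) (sub_nonneg.2 hY1.le)),
    mul_le_mul_of_nonneg_left hY (mul_nonneg (sub_nonneg.2 hXc) (sub_nonneg.2 hX1.le))]

end Real

theorem q_ratio_ineq_c_lt_one_general (q c : ℝ) (hq : 1 < q) (hc0 : 0 < c) (hc1 : c < 1)
    (n j : ℕ) (hj1 : 1 ≤ j) (hj2 : j ≤ n - 1) :
    c * (1 - q ^ (-((n : ℝ) * c))) / (1 - q ^ (-(n : ℝ))) ≤
      (1 - q ^ (-((j : ℝ) * c))) * (1 - q ^ (-(((n : ℝ) - (j : ℝ)) * c))) /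
        ((1 - q ^ (-(j : ℝ))) * (1 - q ^ (-((n : ℝ) - (j : ℝ))))) := by
  have hq0 : 0 < q := by linarith
  have hj : (1 : ℝ) ≤ j := by exact_mod_cast hj1
  have hnj : (1 : ℝ) ≤ n - j := by
    have : (j : ℝ) + 1 ≤ n := by exact_mod_cast (by omega : j + 1 ≤ n)
    linarith
  have hpow_lt_one {t : ℝ} (ht : 1 ≤ t) : q ^ (-t) < 1 :=
    rpow_lt_one_of_one_lt_of_neg hq (by linarith)
  have hpow_mul (t : ℝ) : q ^ (-(t * c)) = (q ^ (-t)) ^ c := by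
    rw [← rpow_mul hq0.le, neg_mul]
  have hsplit : q ^ (-(n : ℝ)) = q ^ (-(j : ℝ)) * q ^ (-((n : ℝ) - j)) := by
    rw [← rpow_add hq0]
    ring_nf
  rw [hpow_mul, hpow_mul, hpow_mul, hsplit, mul_rpow (by positivity) (by positivity)]
  exact mul_one_sub_rpow_mul_div_le hc0.le hc1.le (by positivity) (hpow_lt_one hj)
    (by positivity) (hpow_lt_one hnj)

/-- Inequality (2.3): for `q > 1`, `0 < c < 1`, `n ≥ 2` and `1 ≤ j ≤ n - 1`,
`((1-q^{-jc})(1-q^{-(n-j)c}))/((1-q^{-j})(1-q^{-(n-j)})) ≥ c(1-q^{-nc})/(1-q^{-n})`. -/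
theorem q_ratio_ineq_c_lt_one (q c : ℝ) (hq : 1 < q) (hc0 : 0 < c) (hc1 : c < 1)
    (n j : ℕ) (hn : 2 ≤ n) (hj1 : 1 ≤ j) (hj2 : j ≤ n - 1) :
    c * (1 - q ^ (-((n : ℝ) * c))) / (1 - q ^ (-(n : ℝ))) ≤
      (1 - q ^ (-((j : ℝ) * c))) * (1 - q ^ (-(((n : ℝ) - (j : ℝ)) * c))) /
        ((1 - q ^ (-(j : ℝ))) * (1 - q ^ (-((n : ℝ) - (j : ℝ))))) :=
  q_ratio_ineq_c_lt_one_general q c hq hc0 hc1 n j hj1 hj2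
end

section
/- Let q > 1 and c > 1. Then for every integer n ≥ 2 and every integer j with 1 ≤ j ≤ n-1, ((1-q^{-jc})(1-q^{-(n-j)c}))/((1-q^{-j})(1-q^{-(n-j)})) ≤ c(1-q^{-nc})/(1-q^{-n}). -/
/-!
Writing `q^{-s} = e^{-s log q}`, the claim says that
`F(t) = log(1 - e^{-tx}) + log(1 - e^{-ty}) - log(1 - e^{-t(x+y)}) - log t` satisfies `F(c) ≤ F(1)`.
In fact `F` is antitone on `(0, ∞)`: with `φ(s) = s / (e^s - 1)` one has
`t F'(t) = φ(tx) + φ(ty) - φ(tx + ty) - 1`, and `φ(a) + φ(b) ≤ 1 + φ(a + b)` reduces, after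
clearing denominators, to `a ≤ sinh a` and `b ≤ sinh b`.
-/

open Real Set

lemma two_mul_mul_exp_le_exp_sq_sub_one {a : ℝ} (ha : 0 ≤ a) :
    2 * a * exp a ≤ exp a ^ 2 - 1 := by
  have h := self_le_sinh_iff.mpr ha
  rw [sinh_eq, exp_neg] at h
  have he := exp_pos a
  field_simp at h
  nlinarith

lemma div_sub_one_add_div_sub_one_le {a b A B : ℝ} (hA : 1 < A) (hB : 1 < B)
    (ha : 2 * a * A ≤ A ^ 2 - 1) (hb : 2 * b * B ≤ B ^ 2 - 1) :
    a / (A - 1) + b / (B - 1) ≤ 1 + (a + b) / (A * B - 1) := by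
  have hA' : 0 < A - 1 := by linarith
  have hB' : 0 < B - 1 := by linarith
  have hAB : 0 < A * B - 1 := by nlinarith
  rw [div_add_div _ _ hA'.ne' hB'.ne', one_add_div hAB.ne', div_le_div_iff₀ (by positivity) hAB]
  nlinarith [mul_le_mul_of_nonneg_right ha (sq_nonneg (B - 1)),
    mul_le_mul_of_nonneg_right hb (sq_nonneg (A - 1))]

lemma div_exp_sub_one_add_div_exp_sub_one_le {a b : ℝ} (ha : 0 < a) (hb : 0 < b) :
    a / (exp a - 1) + b / (exp b - 1) ≤ 1 + (a + b) / (exp (a + b) - 1) := by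
  rw [exp_add]
  exact div_sub_one_add_div_sub_one_le (one_lt_exp_iff.mpr ha) (one_lt_exp_iff.mpr hb)
    (two_mul_mul_exp_le_exp_sq_sub_one ha.le) (two_mul_mul_exp_le_exp_sq_sub_one hb.le)

lemma hasDerivAt_log_one_sub_exp_neg_mul {r t : ℝ} (h : t * r ≠ 0) :
    HasDerivAt (fun s => log (1 - exp (-(s * r)))) (r / (exp (t * r) - 1)) t := by
  have hne : 1 - exp (-(t * r)) ≠ 0 := by
    rw [sub_ne_zero, ne_comm, Ne, exp_eq_one_iff]; simpa using h
  have hne' : exp (t * r) - 1 ≠ 0 := by rw [sub_ne_zero, Ne, exp_eq_one_iff]; exact h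
  refine ((((hasDerivAt_id' t).mul_const r).neg.exp).const_sub 1).log hne |>.congr_deriv ?_
  simp only [Pi.neg_apply, one_mul, exp_neg] at hne ⊢
  field_simp

lemma antitoneOn_log_one_sub_exp_neg_mul_sub_log {x y : ℝ} (hx : 0 < x) (hy : 0 < y) :
    AntitoneOn (fun t => log (1 - exp (-(t * x))) + log (1 - exp (-(t * y)))
      - log (1 - exp (-(t * (x + y)))) - log t) (Ioi 0) := by
  have hderiv : ∀ t ∈ Ioi (0 : ℝ), HasDerivAt
      (fun t => log (1 - exp (-(t * x))) + log (1 - exp (-(t * y)))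
        - log (1 - exp (-(t * (x + y)))) - log t)
      (x / (exp (t * x) - 1) + y / (exp (t * y) - 1)
        - (x + y) / (exp (t * (x + y)) - 1) - t⁻¹) t := fun t (ht : 0 < t) =>
    (((hasDerivAt_log_one_sub_exp_neg_mul (by positivity)).add
      (hasDerivAt_log_one_sub_exp_neg_mul (by positivity))).sub
      (hasDerivAt_log_one_sub_exp_neg_mul (by positivity))).sub (hasDerivAt_log ht.ne')
  refine antitoneOn_of_hasDerivWithinAt_nonpos (convex_Ioi 0)
    (fun t ht => (hderiv t ht).continuousAt.continuousWithinAt)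
    (fun t ht => (hderiv t (interior_subset ht)).hasDerivWithinAt) fun t ht => ?_
  rw [interior_Ioi, mem_Ioi] at ht
  have key := div_exp_sub_one_add_div_exp_sub_one_le (mul_pos ht hx) (mul_pos ht hy)
  rw [← mul_add, mul_div_assoc, mul_div_assoc, mul_div_assoc] at key
  have hscaled : t * (x / (exp (t * x) - 1) + y / (exp (t * y) - 1)
      - (x + y) / (exp (t * (x + y)) - 1) - t⁻¹) ≤ 0 := by
    rw [mul_sub, mul_sub, mul_add, mul_inv_cancel₀ ht.ne']
    linarith
  exact nonpos_of_mul_nonpos_right hscaled ht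

lemma one_sub_exp_neg_pos {s : ℝ} (hs : 0 < s) : 0 < 1 - exp (-s) := by
  simpa using hs

lemma one_sub_exp_neg_mul_ratio_le {x y c : ℝ} (hx : 0 < x) (hy : 0 < y) (hc : 1 ≤ c) :
    (1 - exp (-(c * x))) * (1 - exp (-(c * y))) / ((1 - exp (-x)) * (1 - exp (-y))) ≤
      c * (1 - exp (-(c * (x + y)))) / (1 - exp (-(x + y))) := by
  have hc0 : 0 < c := one_pos.trans_le hc
  have h := antitoneOn_log_one_sub_exp_neg_mul_sub_log hx hy (mem_Ioi.mpr one_pos)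
    (mem_Ioi.mpr hc0) hc
  simp only [one_mul, log_one, sub_zero] at h
  have hcx := one_sub_exp_neg_pos (mul_pos hc0 hx)
  have hcy := one_sub_exp_neg_pos (mul_pos hc0 hy)
  have hcxy := one_sub_exp_neg_pos (mul_pos hc0 (add_pos hx hy))
  have hx' := one_sub_exp_neg_pos hx
  have hy' := one_sub_exp_neg_pos hy
  have hxy' := one_sub_exp_neg_pos (add_pos hx hy)
  rw [← log_le_log_iff (div_pos (mul_pos hcx hcy) (mul_pos hx' hy'))
    (div_pos (mul_pos hc0 hcxy) hxy'), log_div (mul_pos hcx hcy).ne' (mul_pos hx' hy').ne',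
    log_div (mul_pos hc0 hcxy).ne' hxy'.ne', log_mul hcx.ne' hcy.ne', log_mul hx'.ne' hy'.ne',
    log_mul hc0.ne' hcxy.ne']
  linarith

lemma one_sub_rpow_neg_mul_ratio_le {q x y c : ℝ} (hq : 1 < q) (hx : 0 < x) (hy : 0 < y)
    (hc : 1 ≤ c) :
    (1 - q ^ (-(x * c))) * (1 - q ^ (-(y * c))) / ((1 - q ^ (-x)) * (1 - q ^ (-y))) ≤
      c * (1 - q ^ (-((x + y) * c))) / (1 - q ^ (-(x + y))) := by
  have hL := log_pos hq
  have h := one_sub_exp_neg_mul_ratio_le (mul_pos hx hL) (mul_pos hy hL) hc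
  simp only [rpow_def_of_pos (one_pos.trans hq)]
  convert h using 6 <;> ring

theorem q_ratio_ineq_c_gt_one_general (q c : ℝ) (hq : 1 < q) (hc : 1 < c)
    (n j : ℕ) (hj1 : 1 ≤ j) (hj2 : j ≤ n - 1) :
    (1 - q ^ (-((j : ℝ) * c))) * (1 - q ^ (-(((n : ℝ) - (j : ℝ)) * c))) /
        ((1 - q ^ (-(j : ℝ))) * (1 - q ^ (-((n : ℝ) - (j : ℝ))))) ≤
      c * (1 - q ^ (-((n : ℝ) * c))) / (1 - q ^ (-(n : ℝ))) := by
  have hj : (0 : ℝ) < j := by exact_mod_cast hj1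
  have hnj : (0 : ℝ) < n - j := by
    rw [sub_pos, Nat.cast_lt]
    omega
  have h := one_sub_rpow_neg_mul_ratio_le hq hj hnj hc.le
  rwa [add_sub_cancel] at h

/-- Reversed inequality (2.3): for `q > 1`, `c > 1`, `n ≥ 2` and `1 ≤ j ≤ n - 1`,
`((1-q^{-jc})(1-q^{-(n-j)c}))/((1-q^{-j})(1-q^{-(n-j)})) ≤ c(1-q^{-nc})/(1-q^{-n})`. -/
theorem q_ratio_ineq_c_gt_one (q c : ℝ) (hq : 1 < q) (hc : 1 < c)
    (n j : ℕ) (hn : 2 ≤ n) (hj1 : 1 ≤ j) (hj2 : j ≤ n - 1) :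
    (1 - q ^ (-((j : ℝ) * c))) * (1 - q ^ (-(((n : ℝ) - (j : ℝ)) * c))) /
        ((1 - q ^ (-(j : ℝ))) * (1 - q ^ (-((n : ℝ) - (j : ℝ))))) ≤
      c * (1 - q ^ (-((n : ℝ) * c))) / (1 - q ^ (-(n : ℝ))) :=
  q_ratio_ineq_c_gt_one_general q c hq hc n j hj1 hj2
end

section
/- For all integers r ≥ 1 and t ≥ 1, 2^{r} + 2^{t} - 2 ≥ (r!·t!/(r+t-1)!) · 2^{r+t-1}. -/
/-!
Fix `r` and induct on `t`. Increasing `t` by one multiplies the left side by `2(t+1)/(r+t)`,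
i.e. adds the fraction `(t+2-r)/(r+t)` of it, while the right side gains `2^t`. When `t + 2 ≤ r`
the left side does not grow. Otherwise the induction hypothesis bounds the increment by
`(2^r + 2^t - 2)(t+2-r)/(r+t)`, which is at most `2^t` because `t + 2 - r ≤ 2^(t+1-r)`.
-/

open Nat

/-- `r! t! / (r+t-1)! * 2^(r+t-1)` at `r = m + 1`, free of truncated subtraction. -/
noncomputable def factorialWeight (m t : ℕ) : ℝ :=
  ((m + 1)! * t ! : ℝ) / (m + t)! * 2 ^ (m + t)

lemma factorialWeight_nonneg (m t : ℕ) : 0 ≤ factorialWeight m t := by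
  unfold factorialWeight; positivity

lemma factorialWeight_one (m : ℕ) : factorialWeight m 1 = 2 ^ (m + 1) := by
  have : ((m + 1)! : ℝ) ≠ 0 := by positivity
  simp [factorialWeight, this]

lemma factorialWeight_succ_mul (m t : ℕ) :
    factorialWeight m (t + 1) * (m + t + 1) = factorialWeight m t * (2 * (t + 1)) := by
  have : ((m + t)! : ℝ) ≠ 0 := by positivity
  simp only [factorialWeight, ← add_assoc, factorial_succ, pow_succ]
  push_cast
  field_simp

lemma two_mul_le_two_pow (n : ℕ) : 2 * n ≤ 2 ^ n := by
  rcases n with _ | n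
  · simp
  · have := Nat.lt_two_pow_self (n := n)
    rw [pow_succ]
    omega

lemma two_pow_add_two_pow_sub_two_mul_le (m t : ℕ) (hmt : m ≤ t + 1) :
    ((2 : ℝ) ^ (m + 1) + 2 ^ t - 2) * (t + 1 - m) ≤ 2 ^ t * (m + t + 1) := by
  obtain ⟨k, hk⟩ := Nat.exists_eq_add_of_le hmt
  have hk' : (t : ℝ) + 1 - m = k := by rw [sub_eq_iff_eq_add']; exact_mod_cast hk
  have hpow : (2 : ℝ) ^ t * 2 = 2 ^ m * 2 ^ k := by rw [← pow_succ, ← pow_add, hk]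
  have hk2 : 2 * (k : ℝ) ≤ 2 ^ k := by exact_mod_cast two_mul_le_two_pow k
  have hm : (2 : ℝ) ^ m - 1 ≤ m * 2 ^ m := by
    rcases m with _ | m
    · simp
    · have : (1 : ℝ) ≤ (m + 1 : ℕ) := by exact_mod_cast Nat.succ_pos m
      nlinarith [pow_pos (two_pos (α := ℝ)) (m + 1)]
  have hsum : (m : ℝ) + t + 1 = 2 * m + k := by linarith
  rw [hk', hsum, pow_succ]
  have h2m : (0 : ℝ) ≤ 2 ^ m - 1 := sub_nonneg.2 (one_le_pow₀ one_le_two)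
  linear_combination mul_le_mul_of_nonneg_left hk2 h2m +
    mul_le_mul_of_nonneg_right hm (pow_pos two_pos k).le - (m : ℝ) * hpow

lemma factorialWeight_le (m t : ℕ) (ht : 1 ≤ t) :
    factorialWeight m t ≤ 2 ^ (m + 1) + 2 ^ t - 2 := by
  induction t, ht using Nat.le_induction with
  | base => simp [factorialWeight_one]
  | succ t _ ih =>
    have hpos : (0 : ℝ) < m + t + 1 := by positivity
    have hgrowth : factorialWeight m t * (t + 1 - m) ≤ 2 ^ t * (m + t + 1) := by
      rcases le_or_gt m (t + 1) with hmt | hmt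
      · calc factorialWeight m t * (t + 1 - m)
            ≤ (2 ^ (m + 1) + 2 ^ t - 2) * (t + 1 - m) := by
              gcongr
              have : (m : ℝ) ≤ t + 1 := by exact_mod_cast hmt
              linarith
          _ ≤ 2 ^ t * (m + t + 1) := two_pow_add_two_pow_sub_two_mul_le m t hmt
      · have : (t : ℝ) + 1 < m := by exact_mod_cast hmt
        calc factorialWeight m t * (t + 1 - m)
            ≤ 0 := mul_nonpos_of_nonneg_of_nonpos (factorialWeight_nonneg m t) (by linarith)
          _ ≤ 2 ^ t * (m + t + 1) := by positivity
    refine le_of_mul_le_mul_right ?_ hpos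
    rw [factorialWeight_succ_mul, pow_succ 2 t]
    linear_combination mul_le_mul_of_nonneg_right ih hpos.le + hgrowth

/-- For all integers `r ≥ 1` and `t ≥ 1`,
`2^r + 2^t - 2 ≥ (r! t!/(r+t-1)!) · 2^{r+t-1}`. -/
theorem two_pow_ineq (r t : ℕ) (hr : 1 ≤ r) (ht : 1 ≤ t) :
    ((r.factorial * t.factorial : ℕ) : ℝ) / ((r + t - 1).factorial : ℝ) * 2 ^ (r + t - 1) ≤
      (2 : ℝ) ^ r + (2 : ℝ) ^ t - 2 := by
  obtain ⟨m, rfl⟩ := Nat.exists_eq_add_of_le' hr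
  rw [show m + 1 + t - 1 = m + t by omega]
  push_cast
  exact factorialWeight_le m t ht
end

section
/- For all integers r ≥ 1 and k ≥ 0, (k+3)^{r} + 4(k+2)^{r} + (k+1)^{r} ≥ (3/(r+1)) · ((k+3)^{r+1} - (k+1)^{r+1}). -/
/-!
The inequality is Simpson's rule for `t ↦ t ^ r` on `[x - 1, x + 1]` with `x = k + 2`: the left side is
`3 ∫_{x-1}^{x+1} t ^ r dt`. Expanding both sides in powers of `x`, only the monomials `x ^ m` with
`r - m` even survive. The coefficients of `x ^ r` agree, and for `m ≤ r - 2` the identity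
`(r + 1 - m) * (r + 1).choose m = (r + 1) * r.choose m` with `r + 1 - m ≥ 3` gives the comparison
coefficient by coefficient; since `x ≥ 0`, the inequality of polynomials follows.
-/

open Finset

section Binomial

variable {R : Type*} [CommRing R] (x : R) (n : ℕ)

lemma add_one_pow_sub_sub_one_pow :
    (x + 1) ^ n - (x - 1) ^ n =
      ∑ m ∈ range (n + 1), (1 - (-1) ^ (m + n)) * n.choose m * x ^ m := by
  rw [add_pow, sub_pow, ← sum_sub_distrib]
  refine sum_congr rfl fun m _ => ?_
  simp only [one_pow]
  ring

lemma add_one_pow_add_sub_one_pow :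
    (x + 1) ^ n + (x - 1) ^ n =
      ∑ m ∈ range (n + 1), (1 + (-1) ^ (m + n)) * n.choose m * x ^ m := by
  rw [add_pow, sub_pow, ← sum_add_distrib]
  refine sum_congr rfl fun m _ => ?_
  simp only [one_pow]
  ring

end Binomial

lemma Nat.mul_choose_succ_le {c r m : ℕ} (h : c + m ≤ r + 1) :
    c * (r + 1).choose m ≤ (r + 1) * r.choose m := by
  calc c * (r + 1).choose m ≤ (r + 1 - m) * (r + 1).choose m := by gcongr; omega
    _ = (r + 1) * r.choose m := by rw [mul_comm, ← Nat.choose_mul_succ_eq, mul_comm]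

lemma Nat.three_mul_choose_succ_le_of_even {r m : ℕ} (hm : Even (m + r)) :
    3 * (r + 1).choose m ≤ (r + 1) * r.choose m + if m = r then 2 * (r + 1) else 0 := by
  obtain rfl | hne := eq_or_ne m r
  · simp only [Nat.choose_succ_self_right, Nat.choose_self, if_true]
    omega
  obtain hlt | hgt := lt_or_gt_of_ne hne
  · have : m + 2 ≤ r := by obtain ⟨t, ht⟩ := hm; omega
    exact (Nat.mul_choose_succ_le (by omega)).trans (Nat.le_add_right _ _)
  · have : r + 1 < m := by obtain ⟨t, ht⟩ := hm; omega
    simp [Nat.choose_eq_zero_of_lt this, Nat.choose_eq_zero_of_lt hgt]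

lemma simpson_coeff_le (r m : ℕ) :
    3 * ((1 - (-1 : ℝ) ^ (m + (r + 1))) * (r + 1).choose m) ≤
      ((r : ℝ) + 1) * ((1 + (-1) ^ (m + r)) * r.choose m) +
        if m = r then 4 * ((r : ℝ) + 1) else 0 := by
  have hite : (0 : ℝ) ≤ if m = r then 4 * ((r : ℝ) + 1) else 0 := by
    split_ifs <;> positivity
  rw [← add_assoc, pow_succ]
  rcases Nat.even_or_odd (m + r) with he | ho
  · rw [he.neg_one_pow]
    have hcast : (3 : ℝ) * (r + 1).choose m ≤
        ((r : ℝ) + 1) * r.choose m + if m = r then 2 * ((r : ℝ) + 1) else 0 := by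
      exact_mod_cast Nat.three_mul_choose_succ_le_of_even he
    split_ifs at hcast ⊢ <;> linarith
  · rw [ho.neg_one_pow]
    linarith

lemma pow_succ_sub_pow_succ_le_simpson (r : ℕ) {x : ℝ} (hx : 0 ≤ x) :
    3 * ((x + 1) ^ (r + 1) - (x - 1) ^ (r + 1)) ≤
      ((r : ℝ) + 1) * ((x + 1) ^ r + 4 * x ^ r + (x - 1) ^ r) := by
  have hsum : (x + 1) ^ r + (x - 1) ^ r =
      ∑ m ∈ range (r + 2), (1 + (-1) ^ (m + r)) * r.choose m * x ^ m := by
    rw [add_one_pow_add_sub_one_pow, sum_range_succ _ (r + 1), Nat.choose_succ_self]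
    simp
  have hmid : ∑ m ∈ range (r + 2), (if m = r then 4 * ((r : ℝ) + 1) else 0) * x ^ m =
      4 * ((r : ℝ) + 1) * x ^ r := by
    simp only [ite_mul, zero_mul]
    rw [sum_ite_eq' (range (r + 2)) r]
    simp
  calc 3 * ((x + 1) ^ (r + 1) - (x - 1) ^ (r + 1))
      = ∑ m ∈ range (r + 2),
          3 * ((1 - (-1) ^ (m + (r + 1))) * (r + 1).choose m) * x ^ m := by
        rw [add_one_pow_sub_sub_one_pow, mul_sum]
        refine sum_congr rfl fun m _ => ?_
        ring
    _ ≤ ∑ m ∈ range (r + 2), (((r : ℝ) + 1) * ((1 + (-1) ^ (m + r)) * r.choose m) +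
          if m = r then 4 * ((r : ℝ) + 1) else 0) * x ^ m :=
        sum_le_sum fun m _ => by gcongr; exact simpson_coeff_le r m
    _ = ((r : ℝ) + 1) * ((x + 1) ^ r + (x - 1) ^ r) + 4 * ((r : ℝ) + 1) * x ^ r := by
        rw [hsum, mul_sum, ← hmid, ← sum_add_distrib]
        refine sum_congr rfl fun m _ => ?_
        ring
    _ = ((r : ℝ) + 1) * ((x + 1) ^ r + 4 * x ^ r + (x - 1) ^ r) := by ring

theorem three_term_pow_ineq_general (r k : ℕ) :
    (3 : ℝ) / ((r : ℝ) + 1) * (((k : ℝ) + 3) ^ (r + 1) - ((k : ℝ) + 1) ^ (r + 1)) ≤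
      ((k : ℝ) + 3) ^ r + 4 * ((k : ℝ) + 2) ^ r + ((k : ℝ) + 1) ^ r := by
  have h := pow_succ_sub_pow_succ_le_simpson r (x := (k : ℝ) + 2) (by positivity)
  rw [show (k : ℝ) + 2 + 1 = k + 3 by ring, show (k : ℝ) + 2 - 1 = k + 1 by ring] at h
  rw [div_mul_eq_mul_div, div_le_iff₀ (by positivity)]
  linarith

/-- For all integers `r ≥ 1` and `k ≥ 0`,
`(k+3)^r + 4(k+2)^r + (k+1)^r ≥ (3/(r+1))((k+3)^{r+1} - (k+1)^{r+1})`. -/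
theorem three_term_pow_ineq (r k : ℕ) (hr : 1 ≤ r) :
    (3 : ℝ) / ((r : ℝ) + 1) * (((k : ℝ) + 3) ^ (r + 1) - ((k : ℝ) + 1) ^ (r + 1)) ≤
      ((k : ℝ) + 3) ^ r + 4 * ((k : ℝ) + 2) ^ r + ((k : ℝ) + 1) ^ r :=
  three_term_pow_ineq_general r k
end
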